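/- arXiv:2407.09914 — 6 statements merged into one kernel-verified Lean document; each statement's English description precedes it below -/
import Mathlib

section
/- Let a < b be reals and f : [a,b] → ℝ be continuous. For each N ≥ 1 set dt = (b−a)/N, and suppose tags t_{N,n} ∈ [a + n·dt, a + (n+1)·dt] are chosen for 0 ≤ n ≤ N−1, together with error terms ε_{N,n} ∈ ℝ satisfying |ε_{N,n}| ≤ C/N² for some constant C independent of N and n. Then lim_{N→∞} ∏_{n=0}^{N−1} (1 + f(t_{N,n})·dt + ε_{N,n}) = exp(∫_a^b f(t) dt). -/
/-!
Write the factors as `1 + u N n` with `u N n = f (t N n) · dt + ε N n = O(1/N)`. Since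
`log (1 + u) = u + O(u²)`, the logarithm of the product differs from `∑ₙ u N n` by `O(N · 1/N²)`,
and `∑ₙ u N n` is a tagged Riemann sum of `f` plus `O(N · 1/N²)`, which tends to `∫ f` by uniform
continuity of `f` on `[a, b]`. Exponentiating gives the limit.
-/

open Filter Finset Topology

namespace Real

theorem abs_log_one_add_sub_self_le {x : ℝ} (hx : |x| ≤ 1 / 2) :
    |log (1 + x) - x| ≤ 2 * x ^ 2 := by
  have h := abs_log_sub_add_sum_range_le (x := -x) (by rw [abs_neg]; linarith) 1
  norm_num [sq_abs] at h
  calc |log (1 + x) - x| = |-x + log (1 + x)| := by ring_nf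
    _ ≤ x ^ 2 / (1 - |x|) := h
    _ ≤ x ^ 2 / (1 / 2) := by gcongr; linarith
    _ = 2 * x ^ 2 := by ring

end Real

theorem tendsto_prod_one_add_of_tendsto_sum {u : ℕ → ℕ → ℝ} {K L : ℝ}
    (hu : ∀ N n, n < N → |u N n| ≤ K / N)
    (hsum : Tendsto (fun N => ∑ n ∈ range N, u N n) atTop (𝓝 L)) :
    Tendsto (fun N => ∏ n ∈ range N, (1 + u N n)) atTop (𝓝 (Real.exp L)) := by
  have hsmall : ∀ᶠ N : ℕ in atTop, ∀ n < N, |u N n| ≤ 1 / 2 := by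
    filter_upwards [(tendsto_const_div_atTop_nhds_zero_nat K).eventually_le_const one_half_pos]
      with N hN n hn using (hu N n hn).trans hN
  have hlog_sub : Tendsto (fun N => ∑ n ∈ range N, (Real.log (1 + u N n) - u N n))
      atTop (𝓝 0) := by
    refine squeeze_zero_norm' ?_ (tendsto_const_div_atTop_nhds_zero_nat (2 * K ^ 2))
    filter_upwards [hsmall] with N hN
    calc ‖∑ n ∈ range N, (Real.log (1 + u N n) - u N n)‖
        ≤ ∑ n ∈ range N, 2 * (K / N) ^ 2 := by
          refine (norm_sum_le _ _).trans (sum_le_sum fun n hn => ?_)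
          rw [mem_range] at hn
          rw [Real.norm_eq_abs]
          refine (Real.abs_log_one_add_sub_self_le (hN n hn)).trans ?_
          rw [← sq_abs]
          gcongr
          exact hu N n hn
      _ ≤ 2 * K ^ 2 / N := by
          rw [sum_const, card_range, nsmul_eq_mul]
          rcases N.eq_zero_or_pos with rfl | hN
          · simp
          · field_simp
            exact le_rfl
  have hlog : Tendsto (fun N => ∑ n ∈ range N, Real.log (1 + u N n)) atTop (𝓝 L) := by
    simpa [sum_sub_distrib] using hsum.add hlog_sub
  refine ((Real.continuous_exp.tendsto L).comp hlog).congr' ?_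
  filter_upwards [hsmall] with N hN
  rw [Function.comp_apply, Real.exp_sum]
  refine prod_congr rfl fun n hn => Real.exp_log ?_
  linarith [(abs_le.1 (hN n (mem_range.1 hn))).1]

theorem add_mul_div_mem_Icc {a b : ℝ} (hab : a ≤ b) {n N : ℕ} (hn : n ≤ N) :
    a + n * ((b - a) / N) ∈ Set.Icc a b := by
  rcases N.eq_zero_or_pos with rfl | hN
  · simp [Nat.le_zero.1 hn, hab]
  have h0 : 0 ≤ (n : ℝ) * ((b - a) / N) :=
    mul_nonneg n.cast_nonneg (div_nonneg (sub_nonneg.2 hab) N.cast_nonneg)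
  have h1 : (n : ℝ) * ((b - a) / N) ≤ b - a := by
    rw [mul_div_left_comm]
    refine mul_le_of_le_one_right (sub_nonneg.2 hab) ?_
    rw [div_le_one (by positivity)]
    exact_mod_cast hn
  exact ⟨by linarith, by linarith⟩

theorem abs_mul_sub_integral_le {f : ℝ → ℝ} {x y c η : ℝ} (hxy : x ≤ y)
    (h : ∀ s ∈ Set.Icc x y, |c - f s| ≤ η) (hf : IntervalIntegrable f MeasureTheory.volume x y) :
    |c * (y - x) - ∫ s in x..y, f s| ≤ η * (y - x) := by
  have hc : c * (y - x) = ∫ _ in x..y, c := by simp [mul_comm]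
  rw [hc, ← intervalIntegral.integral_sub intervalIntegrable_const hf, ← Real.norm_eq_abs]
  refine (intervalIntegral.norm_integral_le_of_norm_le_const (C := η) fun s hs => ?_).trans_eq ?_
  · rw [Set.uIoc_of_le hxy] at hs
    exact h s (Set.Ioc_subset_Icc_self hs)
  · rw [abs_of_nonneg (sub_nonneg.2 hxy)]

theorem ContinuousOn.tendsto_riemannSum_integral {a b : ℝ} (hab : a ≤ b) {f : ℝ → ℝ}
    (hf : ContinuousOn f (Set.Icc a b)) {t : ℕ → ℕ → ℝ}
    (ht : ∀ N n : ℕ, n < N →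
      t N n ∈ Set.Icc (a + n * ((b - a) / N)) (a + (n + 1) * ((b - a) / N))) :
    Tendsto (fun N : ℕ => ∑ n ∈ range N, f (t N n) * ((b - a) / N)) atTop
      (𝓝 (∫ s in a..b, f s)) := by
  refine Metric.tendsto_nhds.2 fun e he => ?_
  set η := e / (b - a + 1)
  obtain ⟨δ, hδ, hfδ⟩ := Metric.uniformContinuousOn_iff_le.1
    (isCompact_Icc.uniformContinuousOn_of_continuous hf) η (by positivity)
  filter_upwards [(tendsto_const_div_atTop_nhds_zero_nat (b - a)).eventually_le_const hδ,
    eventually_gt_atTop 0] with N hNδ hN0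
  set dt := (b - a) / N
  set x : ℕ → ℝ := fun n => a + n * dt
  have hdx (n : ℕ) : x (n + 1) - x n = dt := by simp only [x]; push_cast; ring
  have hdt : 0 ≤ dt := div_nonneg (sub_nonneg.2 hab) N.cast_nonneg
  have hcell (n : ℕ) (hn : n < N) : Set.Icc (x n) (x (n + 1)) ⊆ Set.Icc a b :=
    Set.Icc_subset_Icc (add_mul_div_mem_Icc hab hn.le).1 (add_mul_div_mem_Icc hab hn).2
  have hint (n : ℕ) (hn : n < N) : IntervalIntegrable f MeasureTheory.volume (x n) (x (n + 1)) :=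
    (hf.mono (hcell n hn)).intervalIntegrable_of_Icc (by linarith [hdx n])
  have hsplit : ∫ s in a..b, f s = ∑ n ∈ range N, ∫ s in x n..x (n + 1), f s := by
    rw [intervalIntegral.sum_integral_adjacent_intervals hint]
    congr 1
    · simp [x]
    · simp only [x, dt]; field_simp; ring
  have hterm (n : ℕ) (hn : n < N) :
      |f (t N n) * dt - ∫ s in x n..x (n + 1), f s| ≤ η * dt := by
    have htn : t N n ∈ Set.Icc (x n) (x (n + 1)) := by simpa [x, dt] using ht N n hn
    rw [← hdx n]
    refine abs_mul_sub_integral_le (by linarith [hdx n]) (fun s hs => ?_) (hint n hn)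
    rw [← Real.dist_eq]
    refine hfδ _ (hcell n hn htn) _ (hcell n hn hs) ?_
    rw [Real.dist_eq, abs_le]
    constructor <;> linarith [hdx n, htn.1, htn.2, hs.1, hs.2]
  calc dist (∑ n ∈ range N, f (t N n) * dt) (∫ s in a..b, f s)
      = |∑ n ∈ range N, (f (t N n) * dt - ∫ s in x n..x (n + 1), f s)| := by
        rw [Real.dist_eq, hsplit, sum_sub_distrib]
    _ ≤ ∑ _n ∈ range N, η * dt :=
        (abs_sum_le_sum_abs _ _).trans (sum_le_sum fun n hn => hterm n (mem_range.1 hn))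
    _ = η * (b - a) := by
        rw [sum_const, card_range, nsmul_eq_mul]; simp only [dt]; field_simp
    _ < e := by
        rw [div_mul_eq_mul_div, div_lt_iff₀ (by linarith)]
        nlinarith

theorem tendsto_sum_of_abs_le_div_sq {ε : ℕ → ℕ → ℝ} {C : ℝ}
    (hε : ∀ N n : ℕ, 1 ≤ N → n < N → |ε N n| ≤ C / (N : ℝ) ^ 2) :
    Tendsto (fun N => ∑ n ∈ range N, ε N n) atTop (𝓝 0) := by
  refine squeeze_zero_norm' ?_ (tendsto_const_div_atTop_nhds_zero_nat C)
  filter_upwards [eventually_ge_atTop 1] with N hN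
  calc ‖∑ n ∈ range N, ε N n‖ ≤ ∑ _n ∈ range N, C / (N : ℝ) ^ 2 :=
        (norm_sum_le _ _).trans (sum_le_sum fun n hn => hε N n hN (mem_range.1 hn))
    _ = C / N := by
        have : (N : ℝ) ≠ 0 := by positivity
        rw [sum_const, card_range, nsmul_eq_mul]; field_simp

/-- Let `a < b` and `f : [a,b] → ℝ` continuous. For each `N ≥ 1` let
`dt = (b-a)/N` and suppose the tags `t N n` lie in `[a + n·dt, a + (n+1)·dt]` and the
error terms `ε N n` satisfy `|ε N n| ≤ C/N²` for a constant `C` independent of `N, n`.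
Then `∏_{n=0}^{N-1} (1 + f(t N n)·dt + ε N n) → exp (∫_a^b f)` as `N → ∞`. -/
theorem stmt_1 (a b : ℝ) (hab : a < b) (f : ℝ → ℝ)
    (hf : ContinuousOn f (Set.Icc a b))
    (t : ℕ → ℕ → ℝ) (ε : ℕ → ℕ → ℝ) (C : ℝ)
    (ht : ∀ N n : ℕ, 1 ≤ N → n < N →
      t N n ∈ Set.Icc (a + (n : ℝ) * ((b - a) / N)) (a + ((n : ℝ) + 1) * ((b - a) / N)))
    (hε : ∀ N n : ℕ, 1 ≤ N → n < N → |ε N n| ≤ C / (N : ℝ) ^ 2) :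
    Tendsto (fun N : ℕ => ∏ n ∈ Finset.range N,
        (1 + f (t N n) * ((b - a) / N) + ε N n))
      atTop (nhds (Real.exp (∫ s in a..b, f s))) := by
  have ht' (N n : ℕ) (hn : n < N) := ht N n (by omega) hn
  have htab (N n : ℕ) (hn : n < N) : t N n ∈ Set.Icc a b :=
    Set.Icc_subset_Icc (add_mul_div_mem_Icc hab.le hn.le).1
      (by simpa using (add_mul_div_mem_Icc hab.le hn).2) (ht' N n hn)
  obtain ⟨M, hM⟩ := isCompact_Icc.exists_bound_of_continuousOn hf
  have hC : 0 ≤ C := (abs_nonneg _).trans (by simpa using hε 1 0 le_rfl one_pos)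
  simp_rw [add_assoc]
  refine tendsto_prod_one_add_of_tendsto_sum (K := M * (b - a) + C) (fun N n hn => ?_) ?_
  · have hN : (1 : ℝ) ≤ N := by exact_mod_cast (show 1 ≤ N by omega)
    have hdt : 0 ≤ (b - a) / N := div_nonneg (sub_nonneg.2 hab.le) N.cast_nonneg
    calc |f (t N n) * ((b - a) / N) + ε N n| ≤ M * ((b - a) / N) + C / N ^ 2 := by
          refine (abs_add_le _ _).trans (add_le_add ?_ (hε N n (by omega) hn))
          rw [abs_mul, abs_of_nonneg hdt, ← Real.norm_eq_abs]
          exact mul_le_mul_of_nonneg_right (hM _ (htab N n hn)) hdt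
      _ ≤ M * ((b - a) / N) + C / N := by gcongr; nlinarith
      _ = (M * (b - a) + C) / N := by ring
  · simpa [sum_add_distrib] using
      (hf.tendsto_riemannSum_integral hab.le ht').add (tendsto_sum_of_abs_le_div_sq hε)
end

section
/- Let a < b be reals, k ≥ 1, and let A, B, C : [a,b] → (k×k real matrices) be continuous with A(t) invertible for every t ∈ [a,b]. For each N ≥ 1 set dt = (b−a)/N and choose tags t_{N,n} ∈ [a + n·dt, a + (n+1)·dt] for 0 ≤ n ≤ N−1. Then for all sufficiently large N the matrices A(t_{N,n}) + C(t_{N,n})·dt are invertible for all n < N, and lim_{N→∞} ∏_{n=0}^{N−1} det(A(t_{N,n}) + B(t_{N,n})·dt) / det(A(t_{N,n}) + C(t_{N,n})·dt) = exp(∫_a^b tr(A(t)⁻¹·(B(t) − C(t))) dt). -/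
/-!
Factor `A + h • X = A * (1 + h • (A⁻¹ * X))`, so that the product is the quotient of the products
`∏ det (1 + h • M (t N n))` for `M = A⁻¹ * B` and `M = A⁻¹ * C`. Uniformly for `M` in a compact
set, `det (1 + h • M) = 1 + h tr M + O(h²)`, hence `log det (1 + h • M) = h tr M + O(h²)`. With
`h = (b - a) / N` the `N` error terms add up to `O(1 / N)`, while the main terms form a Riemann sum
of `tr M`; so each product tends to `exp (∫ tr M)`.
-/

open Filter Topology Set Matrix Polynomial

def IsUniformTagging (a b : ℝ) (t : ℕ → ℕ → ℝ) : Prop :=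
  ∀ N n : ℕ, 1 ≤ N → n < N →
    t N n ∈ Icc (a + (n : ℝ) * ((b - a) / N)) (a + ((n : ℝ) + 1) * ((b - a) / N))

lemma abs_mul_sub_integral_le_s2 {f : ℝ → ℝ} {u v τ ε : ℝ} (huv : u ≤ v)
    (hf : IntervalIntegrable f MeasureTheory.volume u v) (hτ : ∀ s ∈ Icc u v, |f τ - f s| ≤ ε) :
    |(v - u) * f τ - ∫ s in u..v, f s| ≤ ε * (v - u) := by
  have hconst : (v - u) * f τ = ∫ _ in u..v, f τ := by simp
  have := intervalIntegral.norm_integral_le_of_norm_le_const (f := fun s => f τ - f s) (C := ε)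
    fun s hs => hτ s (Ioc_subset_Icc_self ((uIoc_of_le huv) ▸ hs))
  rwa [intervalIntegral.integral_sub intervalIntegrable_const hf, ← hconst,
    abs_of_nonneg (sub_nonneg.2 huv)] at this

lemma Icc_uniformCell_subset {a b : ℝ} (hab : a ≤ b) {N n : ℕ} (hn : n < N) :
    Icc (a + (n : ℝ) * ((b - a) / N)) (a + ((n : ℝ) + 1) * ((b - a) / N)) ⊆ Icc a b := by
  have hN : (n : ℝ) + 1 ≤ N := by exact_mod_cast hn
  have hh : 0 ≤ (b - a) / N := div_nonneg (sub_nonneg.2 hab) N.cast_nonneg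
  have hNh : (N : ℝ) * ((b - a) / N) = b - a := mul_div_cancel₀ _ (Nat.cast_ne_zero.2 (by omega))
  apply Icc_subset_Icc <;> nlinarith [n.cast_nonneg (α := ℝ)]

lemma abs_uniformRiemannSum_sub_integral_le {a b ε : ℝ} (hab : a ≤ b) {f : ℝ → ℝ}
    (hf : ContinuousOn f (Icc a b)) {N : ℕ} (hN : 1 ≤ N) {τ : ℕ → ℝ}
    (hosc : ∀ n < N, ∀ s ∈ Icc (a + (n : ℝ) * ((b - a) / N)) (a + ((n : ℝ) + 1) * ((b - a) / N)),
      |f (τ n) - f s| ≤ ε) :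
    |∑ n ∈ Finset.range N, (b - a) / N * f (τ n) - ∫ s in a..b, f s| ≤ ε * (b - a) := by
  set h := (b - a) / N
  have hNh : N * h = b - a := mul_div_cancel₀ _ (Nat.cast_ne_zero.2 (by omega))
  set x : ℕ → ℝ := fun n => a + n * h
  have hx : ∀ n, x (n + 1) = a + ((n : ℝ) + 1) * h := fun n => by simp only [x]; push_cast; ring
  have hxle : ∀ n, x n ≤ x (n + 1) := fun n => by
    rw [hx]; simp only [x]; nlinarith [div_nonneg (sub_nonneg.2 hab) N.cast_nonneg]
  have hint : ∀ n < N, IntervalIntegrable f MeasureTheory.volume (x n) (x (n + 1)) := fun n hn =>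
    (hf.mono (uIcc_of_le (hxle n) ▸ hx n ▸ Icc_uniformCell_subset hab hn)).intervalIntegrable
  have hsplit : ∑ n ∈ Finset.range N, ∫ s in x n..x (n + 1), f s = ∫ s in a..b, f s := by
    rw [intervalIntegral.sum_integral_adjacent_intervals hint]
    simp only [x, Nat.cast_zero, zero_mul, add_zero, hNh, add_sub_cancel]
  have hcell : ∀ n < N, |h * f (τ n) - ∫ s in x n..x (n + 1), f s| ≤ ε * h := fun n hn => by
    have hlen : x (n + 1) - x n = h := by rw [hx]; simp only [x]; ring
    rw [← hlen]
    exact abs_mul_sub_integral_le_s2 (hxle n) (hint n hn) (hx n ▸ hosc n hn)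
  rw [← hsplit, ← Finset.sum_sub_distrib]
  calc _ ≤ ∑ n ∈ Finset.range N, |h * f (τ n) - ∫ s in x n..x (n + 1), f s| :=
        Finset.abs_sum_le_sum_abs _ _
    _ ≤ ∑ n ∈ Finset.range N, ε * h :=
        Finset.sum_le_sum fun n hn => hcell n (Finset.mem_range.1 hn)
    _ = ε * (b - a) := by rw [Finset.sum_const, Finset.card_range, nsmul_eq_mul, ← hNh]; ring

namespace IsUniformTagging

variable {a b : ℝ} {t : ℕ → ℕ → ℝ}

lemma mem_Icc (ht : IsUniformTagging a b t) (hab : a ≤ b) {N n : ℕ} (hn : n < N) :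
    t N n ∈ Icc a b :=
  Icc_uniformCell_subset hab hn (ht N n (by omega) hn)

lemma tendsto_riemannSum (ht : IsUniformTagging a b t) (hab : a ≤ b) {f : ℝ → ℝ}
    (hf : ContinuousOn f (Icc a b)) :
    Tendsto (fun N : ℕ => ∑ n ∈ Finset.range N, (b - a) / N * f (t N n)) atTop
      (𝓝 (∫ s in a..b, f s)) := by
  rw [Metric.tendsto_nhds]
  intro ε hε
  set ε' := ε / (b - a + 1)
  have hε' : ε' * (b - a) < ε := by
    rw [div_mul_eq_mul_div, div_lt_iff₀ (by linarith)]; nlinarith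
  obtain ⟨δ, hδ, hfδ⟩ := Metric.uniformContinuousOn_iff.1
    (isCompact_Icc.uniformContinuousOn_of_continuous hf) ε' (by positivity)
  filter_upwards [eventually_ge_atTop 1,
    (tendsto_const_div_atTop_nhds_zero_nat (b - a)).eventually (gt_mem_nhds hδ)] with N hN hNδ
  refine lt_of_le_of_lt ?_ hε'
  refine abs_uniformRiemannSum_sub_integral_le hab hf hN fun n hn s hs => ?_
  have htag := ht N n hN hn
  have hts : dist (t N n) s < δ := by
    rw [Real.dist_eq, abs_lt]; constructor <;> nlinarith [htag.1, htag.2, hs.1, hs.2]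
  have hcell := Icc_uniformCell_subset hab hn
  simpa only [Real.dist_eq] using (hfδ _ (hcell htag) _ (hcell hs) hts).le

end IsUniformTagging

lemma Real.abs_log_sub_sub_one_le {y : ℝ} (hy : 1 / 2 ≤ y) :
    |Real.log y - (y - 1)| ≤ 2 * (y - 1) ^ 2 := by
  have hy0 : 0 < y := by linarith
  have hlow := Real.one_sub_inv_le_log_of_pos hy0
  have hup := Real.log_le_sub_one_of_pos hy0
  have hgap : (y - 1) - (1 - y⁻¹) ≤ 2 * (y - 1) ^ 2 := by
    rw [show (y - 1) - (1 - y⁻¹) = (y - 1) ^ 2 / y by field_simp, div_le_iff₀ hy0]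
    nlinarith [sq_nonneg (y - 1)]
  rw [abs_sub_comm, abs_of_nonneg (by linarith)]
  linarith

namespace Matrix

/-- `det (1 + r • M)` is a polynomial in `r` of degree at most `Fintype.card n`, so Lagrange
interpolation at `Fintype.card n + 1` nonzero nodes expresses its second-order remainder
(`detRemainder`) as a visibly continuous function of `(M, r)`. -/
noncomputable def detNodes (d : ℕ) : Finset ℝ :=
  (Finset.range (d + 1)).image fun i : ℕ => (i : ℝ) + 1

lemma card_detNodes (d : ℕ) : (detNodes d).card = d + 1 :=
  (Finset.card_image_of_injective _ fun i j hij => by simpa using hij).trans (Finset.card_range _)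

lemma ne_zero_of_mem_detNodes {d : ℕ} {x : ℝ} (hx : x ∈ detNodes d) : x ≠ 0 := by
  obtain ⟨i, -, rfl⟩ := Finset.mem_image.1 hx
  positivity

variable {n : Type*} [Fintype n] [DecidableEq n]

noncomputable def detRemainder (M : Matrix n n ℝ) (r : ℝ) : ℝ :=
  ∑ x ∈ detNodes (Fintype.card n), (det (1 + x • M) - 1 - trace M * x) / x ^ 2 *
    (Lagrange.basis (detNodes (Fintype.card n)) id x).eval r

lemma det_one_add_smul_eq_detRemainder (M : Matrix n n ℝ) (r : ℝ) :
    det (1 + r • M) = 1 + trace M * r + detRemainder M r * r ^ 2 := by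
  set P := (det (1 + (X : ℝ[X]) • M.map C)).divX.divX
  have hP : ∀ u : ℝ, det (1 + u • M) = 1 + trace M * u + P.eval u * u ^ 2 :=
    fun u => det_one_add_smul u M
  have hdeg : P.degree < (detNodes (Fintype.card n)).card := by
    have hdet : (det (1 + (X : ℝ[X]) • M.map C)).natDegree ≤ Fintype.card n := by
      simpa [add_comm] using natDegree_det_X_add_C_le M 1
    rw [card_detNodes]
    exact (degree_le_natDegree.trans_lt (WithBot.coe_lt_coe.2 (Nat.lt_succ_of_le
      (natDegree_divX_le.trans (natDegree_divX_le.trans hdet)))))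
  have hinterp : P.eval r = ∑ x ∈ detNodes (Fintype.card n),
      P.eval x * (Lagrange.basis (detNodes (Fintype.card n)) id x).eval r := by
    conv_lhs => rw [Lagrange.eq_interpolate (v := id) Function.injective_id.injOn hdeg]
    simp [Lagrange.interpolate_apply, eval_finsetSum]
  rw [hP, hinterp, detRemainder]
  congr 2
  refine Finset.sum_congr rfl fun x hx => ?_
  congr 1
  rw [hP, eq_div_iff (pow_ne_zero 2 (ne_zero_of_mem_detNodes hx))]
  ring

lemma continuous_detRemainder :
    Continuous fun p : Matrix n n ℝ × ℝ => detRemainder p.1 p.2 := by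
  refine continuous_finsetSum _ fun x _ =>
    Continuous.mul ?_ ((Polynomial.continuous _).comp continuous_snd)
  fun_prop

lemma exists_abs_det_one_add_smul_sub_le {K : Set (Matrix n n ℝ)} (hK : IsCompact K) :
    ∃ R, 0 ≤ R ∧ ∀ M ∈ K, ∀ h : ℝ, |h| ≤ 1 →
      |trace M| ≤ R ∧ |det (1 + h • M) - 1 - h * trace M| ≤ R * h ^ 2 := by
  obtain ⟨R, hR⟩ := (hK.prod (isCompact_Icc (a := -1) (b := 1))).exists_bound_of_continuousOn
    (f := fun p => |trace p.1| + |detRemainder p.1 p.2|)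
    ((continuous_id.matrix_trace.comp continuous_fst).abs.add
      continuous_detRemainder.abs).continuousOn
  refine ⟨max R 0, le_max_right _ _, fun M hM h hh => ?_⟩
  have hbound := (hR (M, h) ⟨hM, abs_le.1 hh⟩).trans (le_max_left R 0)
  rw [Real.norm_of_nonneg (by positivity)] at hbound
  refine ⟨by linarith [abs_nonneg (detRemainder M h)], ?_⟩
  rw [det_one_add_smul_eq_detRemainder, show ∀ u v w : ℝ, 1 + u + v - 1 - w = v + (u - w) by
    intros; ring, mul_comm (trace M), sub_self, add_zero, abs_mul, abs_of_nonneg (sq_nonneg h)]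
  exact mul_le_mul_of_nonneg_right (by linarith [abs_nonneg (trace M)]) (sq_nonneg h)

lemma exists_abs_log_det_one_add_smul_sub_le {K : Set (Matrix n n ℝ)} (hK : IsCompact K) :
    ∃ C δ, 0 < δ ∧ ∀ M ∈ K, ∀ h : ℝ, |h| ≤ δ →
      1 / 2 ≤ det (1 + h • M) ∧ |Real.log (det (1 + h • M)) - h * trace M| ≤ C * h ^ 2 := by
  obtain ⟨R, hR0, hR⟩ := exists_abs_det_one_add_smul_sub_le hK
  refine ⟨8 * R ^ 2 + R, min 1 (1 / (4 * R + 1)), by positivity, fun M hM h hh => ?_⟩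
  have hh1 : |h| ≤ 1 := hh.trans (min_le_left _ _)
  have hhR : |h| * (4 * R + 1) ≤ 1 :=
    (le_div_iff₀ (by positivity)).1 (by simpa using hh.trans (min_le_right _ _))
  obtain ⟨htr, hrem⟩ := hR M hM h hh1
  set x := det (1 + h • M) - 1
  have hsq : h ^ 2 ≤ |h| := by nlinarith [sq_abs h, abs_nonneg h]
  have hx : |x| ≤ 2 * R * |h| := by
    calc |x| ≤ |x - h * trace M| + |h * trace M| := by
          linarith [abs_sub_abs_le_abs_sub x (h * trace M)]
      _ ≤ R * h ^ 2 + |h| * R := by rw [abs_mul]; gcongr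
      _ ≤ 2 * R * |h| := by nlinarith
  have hx_half : |x| ≤ 1 / 2 := by nlinarith [abs_nonneg h]
  have hdet : 1 / 2 ≤ det (1 + h • M) := by linarith [(abs_le.1 hx_half).1]
  refine ⟨hdet, ?_⟩
  calc |Real.log (det (1 + h • M)) - h * trace M|
      ≤ |Real.log (det (1 + h • M)) - x| + |x - h * trace M| := abs_sub_le _ _ _
    _ ≤ 2 * x ^ 2 + R * h ^ 2 := add_le_add (Real.abs_log_sub_sub_one_le hdet) hrem
    _ ≤ (8 * R ^ 2 + R) * h ^ 2 := by nlinarith [sq_abs x, sq_abs h, abs_nonneg x]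

lemma det_add_smul_eq_det_mul_det_one_add_smul {A : Matrix n n ℝ} (hA : IsUnit A.det)
    (X : Matrix n n ℝ) (h : ℝ) : det (A + h • X) = det A * det (1 + h • (A⁻¹ * X)) := by
  rw [← det_mul, mul_add, mul_one, Matrix.mul_smul, ← Matrix.mul_assoc, mul_nonsing_inv _ hA,
    one_mul]

end Matrix

lemma ContinuousOn.matrix_inv_mul {n : Type*} [Fintype n] [DecidableEq n]
    {A X : ℝ → Matrix n n ℝ} {s : Set ℝ} (hA : ContinuousOn A s) (hdet : ∀ x ∈ s, IsUnit (A x).det)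
    (hX : ContinuousOn X s) : ContinuousOn (fun x => (A x)⁻¹ * X x) s := by
  have hinv : ContinuousOn (fun x => (A x)⁻¹) s := fun x hx =>
    (continuousAt_matrix_inv _ (Ring.inverse_eq_inv' (G₀ := ℝ) ▸
      continuousAt_inv₀ (hdet x hx).ne_zero)).comp_continuousWithinAt (hA x hx)
  exact (continuous_fst.matrix_mul continuous_snd).comp_continuousOn (hinv.prodMk hX)

namespace IsUniformTagging

variable {a b : ℝ} {t : ℕ → ℕ → ℝ}
  {n : Type*} [Fintype n] [DecidableEq n] {M : ℝ → Matrix n n ℝ}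

lemma exists_eventually_abs_log_det_sub_le (ht : IsUniformTagging a b t) (hab : a ≤ b)
    (hM : ContinuousOn M (Icc a b)) :
    ∃ C, ∀ᶠ N : ℕ in atTop, ∀ i < N, 1 / 2 ≤ det (1 + ((b - a) / N) • M (t N i)) ∧
      |Real.log (det (1 + ((b - a) / N) • M (t N i))) - (b - a) / N * trace (M (t N i))|
        ≤ C * ((b - a) / N) ^ 2 := by
  obtain ⟨C, δ, hδ, hCδ⟩ :=
    exists_abs_log_det_one_add_smul_sub_le (isCompact_Icc.image_of_continuousOn hM)
  refine ⟨C, ?_⟩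
  filter_upwards [(tendsto_const_div_atTop_nhds_zero_nat (b - a)).eventually
    (Metric.closedBall_mem_nhds 0 hδ)] with N hN i hi
  rw [Real.dist_0_eq_abs] at hN
  exact hCδ _ (mem_image_of_mem M (ht.mem_Icc hab hi)) _ hN

lemma tendsto_prod_det_one_add_smul (ht : IsUniformTagging a b t) (hab : a ≤ b)
    (hM : ContinuousOn M (Icc a b)) :
    Tendsto (fun N : ℕ => ∏ i ∈ Finset.range N, det (1 + ((b - a) / N) • M (t N i))) atTop
      (𝓝 (Real.exp (∫ s in a..b, trace (M s)))) := by
  obtain ⟨C, hC⟩ := ht.exists_eventually_abs_log_det_sub_le hab hM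
  set logSum := fun N : ℕ => ∑ i ∈ Finset.range N, Real.log (det (1 + ((b - a) / N) • M (t N i)))
  set riemannSum := fun N : ℕ => ∑ i ∈ Finset.range N, (b - a) / N * trace (M (t N i))
  have hprod : ∀ᶠ N : ℕ in atTop,
      Real.exp (logSum N) = ∏ i ∈ Finset.range N, det (1 + ((b - a) / N) • M (t N i)) := by
    filter_upwards [hC] with N hN
    rw [Real.exp_sum]
    exact Finset.prod_congr rfl fun i hi =>
      Real.exp_log (by linarith [(hN i (Finset.mem_range.1 hi)).1])
  have herr : Tendsto (fun N => logSum N - riemannSum N) atTop (𝓝 0) := by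
    refine squeeze_zero_norm' ?_ (by simpa using
      (tendsto_const_div_atTop_nhds_zero_nat (b - a)).const_mul (C * (b - a)))
    filter_upwards [hC, eventually_ge_atTop 1] with N hN hN1
    have hNh : (N : ℝ) * ((b - a) / N) = b - a := mul_div_cancel₀ _ (by positivity)
    rw [Real.norm_eq_abs, ← Finset.sum_sub_distrib]
    calc _ ≤ ∑ i ∈ Finset.range N, C * ((b - a) / N) ^ 2 :=
          (Finset.abs_sum_le_sum_abs _ _).trans
            (Finset.sum_le_sum fun i hi => (hN i (Finset.mem_range.1 hi)).2)
      _ = C * ((N : ℝ) * ((b - a) / N)) * ((b - a) / N) := by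
          rw [Finset.sum_const, Finset.card_range, nsmul_eq_mul]; ring
      _ = C * (b - a) * ((b - a) / N) := by rw [hNh]
  have hlog := (herr.add (ht.tendsto_riemannSum hab
    (continuous_id.matrix_trace.comp_continuousOn hM))).congr fun N => sub_add_cancel _ _
  rw [zero_add] at hlog
  exact ((Real.continuous_exp.tendsto _).comp hlog).congr' hprod

lemma prod_det_add_smul_div_det_add_smul (ht : IsUniformTagging a b t) (hab : a ≤ b)
    {A B C : ℝ → Matrix n n ℝ} (hA : ∀ s ∈ Icc a b, IsUnit (A s).det) (N : ℕ) :
    ∏ i ∈ Finset.range N,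
        det (A (t N i) + ((b - a) / N) • B (t N i)) / det (A (t N i) + ((b - a) / N) • C (t N i)) =
      (∏ i ∈ Finset.range N, det (1 + ((b - a) / N) • ((A (t N i))⁻¹ * B (t N i)))) /
        ∏ i ∈ Finset.range N, det (1 + ((b - a) / N) • ((A (t N i))⁻¹ * C (t N i))) := by
  rw [← Finset.prod_div_distrib]
  refine Finset.prod_congr rfl fun i hi => ?_
  have hAi := hA _ (ht.mem_Icc hab (Finset.mem_range.1 hi))
  rw [det_add_smul_eq_det_mul_det_one_add_smul hAi, det_add_smul_eq_det_mul_det_one_add_smul hAi,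
    mul_div_mul_left _ _ hAi.ne_zero]

end IsUniformTagging

theorem stmt_2_general (a b : ℝ) (hab : a < b) (k : ℕ)
    (A B C : ℝ → Matrix (Fin k) (Fin k) ℝ)
    (hA : ContinuousOn A (Set.Icc a b))
    (hB : ContinuousOn B (Set.Icc a b))
    (hC : ContinuousOn C (Set.Icc a b))
    (hAinv : ∀ s ∈ Set.Icc a b, IsUnit (A s).det)
    (t : ℕ → ℕ → ℝ)
    (ht : ∀ N n : ℕ, 1 ≤ N → n < N →
      t N n ∈ Set.Icc (a + (n : ℝ) * ((b - a) / N)) (a + ((n : ℝ) + 1) * ((b - a) / N))) :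
    (∀ᶠ N : ℕ in atTop, ∀ n < N,
        IsUnit (A (t N n) + ((b - a) / (N : ℝ)) • C (t N n)).det) ∧
    Tendsto (fun N : ℕ => ∏ n ∈ Finset.range N,
        (A (t N n) + ((b - a) / (N : ℝ)) • B (t N n)).det /
          (A (t N n) + ((b - a) / (N : ℝ)) • C (t N n)).det)
      atTop (nhds (Real.exp (∫ s in a..b, ((A s)⁻¹ * (B s - C s)).trace))) := by
  have ht' : IsUniformTagging a b t := ht
  have hMB := hA.matrix_inv_mul hAinv hB
  have hMC := hA.matrix_inv_mul hAinv hC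
  obtain ⟨_, hMC_log⟩ := ht'.exists_eventually_abs_log_det_sub_le hab.le hMC
  refine ⟨?_, ?_⟩
  · filter_upwards [hMC_log] with N hN n hn
    have hAn := hAinv _ (ht'.mem_Icc hab.le hn)
    rw [det_add_smul_eq_det_mul_det_one_add_smul hAn, IsUnit.mul_iff]
    exact ⟨hAn, isUnit_iff_ne_zero.2 (by linarith [(hN n hn).1])⟩
  · have hintegral : ∫ s in a..b, ((A s)⁻¹ * (B s - C s)).trace =
        (∫ s in a..b, ((A s)⁻¹ * B s).trace) - ∫ s in a..b, ((A s)⁻¹ * C s).trace := by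
      simp only [Matrix.mul_sub, trace_sub]
      exact intervalIntegral.integral_sub
        ((continuous_id.matrix_trace.comp_continuousOn hMB).intervalIntegrable_of_Icc hab.le)
        ((continuous_id.matrix_trace.comp_continuousOn hMC).intervalIntegrable_of_Icc hab.le)
    rw [hintegral, Real.exp_sub]
    refine Tendsto.congr (fun N => (ht'.prod_det_add_smul_div_det_add_smul hab.le hAinv N).symm) ?_
    have hBlim := ht'.tendsto_prod_det_one_add_smul hab.le hMB
    have hClim := ht'.tendsto_prod_det_one_add_smul hab.le hMC
    exact hBlim.div hClim (Real.exp_pos _).ne'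

/-- Let `a < b`, `k ≥ 1`, and `A B C : [a,b] → Mat_{k×k}(ℝ)` continuous with
`A t` invertible for every `t ∈ [a,b]`. For each `N ≥ 1` let `dt = (b-a)/N` and choose tags
`t N n ∈ [a + n·dt, a + (n+1)·dt]`. Then for all sufficiently large `N` the matrices
`A (t N n) + dt • C (t N n)` are invertible for all `n < N`, and
`∏_{n=0}^{N-1} det (A (t N n) + dt • B (t N n)) / det (A (t N n) + dt • C (t N n))`
converges to `exp (∫_a^b tr (A(s)⁻¹ (B(s) − C(s))) ds)` as `N → ∞`. -/
theorem stmt_2 (a b : ℝ) (hab : a < b) (k : ℕ) (hk : 1 ≤ k)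
    (A B C : ℝ → Matrix (Fin k) (Fin k) ℝ)
    (hA : ContinuousOn A (Set.Icc a b))
    (hB : ContinuousOn B (Set.Icc a b))
    (hC : ContinuousOn C (Set.Icc a b))
    (hAinv : ∀ s ∈ Set.Icc a b, IsUnit (A s).det)
    (t : ℕ → ℕ → ℝ)
    (ht : ∀ N n : ℕ, 1 ≤ N → n < N →
      t N n ∈ Set.Icc (a + (n : ℝ) * ((b - a) / N)) (a + ((n : ℝ) + 1) * ((b - a) / N))) :
    (∀ᶠ N : ℕ in atTop, ∀ n < N,
        IsUnit (A (t N n) + ((b - a) / (N : ℝ)) • C (t N n)).det) ∧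
    Tendsto (fun N : ℕ => ∏ n ∈ Finset.range N,
        (A (t N n) + ((b - a) / (N : ℝ)) • B (t N n)).det /
          (A (t N n) + ((b - a) / (N : ℝ)) • C (t N n)).det)
      atTop (nhds (Real.exp (∫ s in a..b, ((A s)⁻¹ * (B s - C s)).trace))) :=
  stmt_2_general a b hab k A B C hA hB hC hAinv t ht
end

section
/- Fix d ≥ 1, m > 0 and q ∈ ℝ. Let g be a coordinate metric on ℝ^{d+1} with Christoffel symbols Γ^μ_{αβ}, and let F_{μν} : ℝ^{d+1} → ℝ be antisymmetric (F_{μν} = −F_{νμ}); set F^μ_ν(x) := g^{μρ}(x)F_{ρν}(x). Suppose x, p : ℝ → ℝ^{d+1} are differentiable and satisfy, for all τ and all μ: dx^μ/dτ = p^μ/m and dp^μ/dτ = (q/m)·F^μ_ν(x(τ))·p^ν − (1/m)·Γ^μ_{αβ}(x(τ))·p^α p^β. Then the function τ ↦ g_{μν}(x(τ))·p^μ(τ)·p^ν(τ) is constant; in particular, a trajectory starting on the mass shell g_{μν}p^μp^ν = −m² remains on it for all τ. -/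
/-!
Along the flow, `d/dτ (g_{μν} p^μ p^ν) = (∂_α g_{μν}) ẋ^α p^μ p^ν + 2 g_{μν} ṗ^μ p^ν`.
Lowering the index of the momentum equation with `g_{μν} g^{νρ} = δ_μ^ρ` turns the force term into
`(q/m) F_{νσ} p^σ p^ν`, which vanishes by antisymmetry, and the Christoffel term into
`−(1/2m)(∂_α g_{νβ} + ∂_β g_{να} − ∂_ν g_{αβ}) p^α p^β p^ν = −(1/2m) ∂_α g_{μν} p^α p^μ p^ν`,
which, doubled, cancels the first summand.
-/

/-- The Christoffel symbols `Γ^μ_{αβ} = ½ g^{μρ} (∂_α g_{ρβ} + ∂_β g_{ρα} − ∂_ρ g_{αβ})`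
of a coordinate metric `g`, expressed via the array `Dg` of partial derivatives of `g`
(`Dg y α ρ β = ∂_α g_{ρβ}(y)`). -/
noncomputable def Christoffel (d : ℕ)
    (g : (Fin (d + 1) → ℝ) → Matrix (Fin (d + 1)) (Fin (d + 1)) ℝ)
    (Dg : (Fin (d + 1) → ℝ) → Fin (d + 1) → Fin (d + 1) → Fin (d + 1) → ℝ)
    (y : Fin (d + 1) → ℝ) (μ α β : Fin (d + 1)) : ℝ :=
  (1 / 2) * ∑ ρ, (g y)⁻¹ μ ρ * (Dg y α ρ β + Dg y β ρ α - Dg y ρ α β)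

open Finset Matrix

section
variable {ι : Type*} [Fintype ι]

lemma sum_sum_mul_mul_eq_zero_of_antisymm (A : ι → ι → ℝ) (hA : ∀ i j, A i j = -A j i)
    (v : ι → ℝ) : ∑ i, ∑ j, A i j * v i * v j = 0 := by
  have h : ∑ i, ∑ j, A i j * v i * v j = -∑ i, ∑ j, A i j * v i * v j := by
    conv_rhs => rw [sum_comm]
    simp only [← sum_neg_distrib]
    exact sum_congr rfl fun i _ => sum_congr rfl fun j _ => by rw [hA]; ring
  linarith

lemma sum_sum_sum_symmetrized_mul_mul_mul (D : ι → ι → ι → ℝ) (v : ι → ℝ) :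
    ∑ ν, (∑ α, ∑ β, (D α ν β + D β ν α - D ν α β) * v α * v β) * v ν
      = ∑ μ, ∑ ν, ∑ α, D α μ ν * v α * v μ * v ν := by
  set T := ∑ μ, ∑ ν, ∑ α, D α μ ν * v α * v μ * v ν
  have h₁ : ∑ ν, ∑ α, ∑ β, D α ν β * v α * v β * v ν = T := by
    rw [sum_congr rfl fun ν _ => sum_comm]
    exact sum_congr rfl fun _ _ => sum_congr rfl fun _ _ => sum_congr rfl fun _ _ => by ring
  have h₂ : ∑ ν, ∑ α, ∑ β, D β ν α * v α * v β * v ν = T :=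
    sum_congr rfl fun _ _ => sum_congr rfl fun _ _ => sum_congr rfl fun _ _ => by ring
  have h₃ : ∑ ν, ∑ α, ∑ β, D ν α β * v α * v β * v ν = T := by
    rw [sum_comm, sum_congr rfl fun ν _ => sum_comm]
    exact sum_congr rfl fun _ _ => sum_congr rfl fun _ _ => sum_congr rfl fun _ _ => by ring
  simp only [sum_mul, add_mul, sub_mul, sum_add_distrib, sum_sub_distrib, h₁, h₂, h₃]
  ring

lemma sum_mul_sum_inv_mul [DecidableEq ι] {G : Matrix ι ι ℝ} (hG : G.IsSymm)
    (hdet : IsUnit G.det) (w : ι → ℝ) (ν : ι) : ∑ μ, G μ ν * ∑ ρ, G⁻¹ μ ρ * w ρ = w ν := by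
  have := congrFun (congrArg (· *ᵥ w) (G.mul_nonsing_inv hdet)) ν
  simp only [← mulVec_mulVec, one_mulVec] at this
  rw [← this]
  exact sum_congr rfl fun μ _ => by rw [hG.apply]; rfl

lemma HasDerivAt.sum_sum_mul_mul {G : ℝ → ι → ι → ℝ} {G' : ι → ι → ℝ} {v : ℝ → ι → ℝ}
    {v' : ι → ℝ} {t : ℝ} (hG : ∀ i j, HasDerivAt (fun s => G s i j) (G' i j) t)
    (hv : ∀ i, HasDerivAt (fun s => v s i) (v' i) t) (hsymm : ∀ i j, G t i j = G t j i) :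
    HasDerivAt (fun s => ∑ i, ∑ j, G s i j * v s i * v s j)
      (∑ i, ∑ j, G' i j * v t i * v t j + 2 * ∑ i, ∑ j, G t i j * v' i * v t j) t := by
  refine (HasDerivAt.fun_sum fun i _ => HasDerivAt.fun_sum fun j _ =>
    ((hG i j).fun_mul (hv i)).fun_mul (hv j)).congr_deriv ?_
  have hswap : ∑ i, ∑ j, G t i j * v t i * v' j = ∑ i, ∑ j, G t i j * v' i * v t j := by
    rw [sum_comm]
    exact sum_congr rfl fun i _ => sum_congr rfl fun j _ => by rw [hsymm]; ring
  simp only [add_mul, sum_add_distrib, hswap]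
  ring

lemma HasFDerivAt.comp_hasDerivAt_of_partials {f : (ι → ℝ) → ℝ} {D : ι → ℝ} {x : ℝ → ι → ℝ}
    {x' : ι → ℝ} {t : ℝ}
    (hf : HasFDerivAt f (∑ α, D α • (ContinuousLinearMap.proj α : (ι → ℝ) →L[ℝ] ℝ)) (x t))
    (hx : ∀ α, HasDerivAt (fun s => x s α) (x' α) t) :
    HasDerivAt (fun s => f (x s)) (∑ α, D α * x' α) t :=
  (hf.comp_hasDerivAt t (hasDerivAt_pi.2 hx)).congr_deriv (by simp)
end

section
variable {d : ℕ} {g : (Fin (d + 1) → ℝ) → Matrix (Fin (d + 1)) (Fin (d + 1)) ℝ}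
  {Dg : (Fin (d + 1) → ℝ) → Fin (d + 1) → Fin (d + 1) → Fin (d + 1) → ℝ} {y : Fin (d + 1) → ℝ}

lemma sum_sum_christoffel_mul_mul (μ : Fin (d + 1)) (v : Fin (d + 1) → ℝ) :
    ∑ α, ∑ β, Christoffel d g Dg y μ α β * v α * v β
      = ∑ ρ, (g y)⁻¹ μ ρ *
          (1 / 2 * ∑ α, ∑ β, (Dg y α ρ β + Dg y β ρ α - Dg y ρ α β) * v α * v β) := by
  simp only [Christoffel, mul_sum, sum_mul]
  rw [sum_congr rfl fun α _ => sum_comm, sum_comm]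
  exact sum_congr rfl fun _ _ => sum_congr rfl fun _ _ => sum_congr rfl fun _ _ => by ring

lemma sum_metric_mul_lorentz_force (hsymm : (g y).IsSymm) (hdet : IsUnit (g y).det) (m q : ℝ)
    (F : Matrix (Fin (d + 1)) (Fin (d + 1)) ℝ) (v : Fin (d + 1) → ℝ) (ν : Fin (d + 1)) :
    ∑ μ, g y μ ν * (q / m * ∑ σ, (∑ ρ, (g y)⁻¹ μ ρ * F ρ σ) * v σ
        - 1 / m * ∑ α, ∑ β, Christoffel d g Dg y μ α β * v α * v β)
      = q / m * ∑ σ, F ν σ * v σ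
        - 1 / m * (1 / 2 * ∑ α, ∑ β, (Dg y α ν β + Dg y β ν α - Dg y ν α β) * v α * v β) := by
  have hF : ∀ μ, ∑ σ, (∑ ρ, (g y)⁻¹ μ ρ * F ρ σ) * v σ = ∑ ρ, (g y)⁻¹ μ ρ * (F *ᵥ v) ρ :=
    fun μ => congrFun (mulVec_mulVec v (g y)⁻¹ F).symm μ
  simp only [mul_sub, sum_sub_distrib, mul_left_comm (g y _ ν), ← mul_sum, hF,
    sum_sum_christoffel_mul_mul, sum_mul_sum_inv_mul hsymm hdet]
  rfl

lemma mass_shell_deriv_eq_zero (hsymm : (g y).IsSymm)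
    (hdet : IsUnit (g y).det) (m q : ℝ) (F : Matrix (Fin (d + 1)) (Fin (d + 1)) ℝ)
    (hF : ∀ μ ν, F μ ν = -F ν μ) (v : Fin (d + 1) → ℝ) :
    ∑ μ, ∑ ν, (∑ α, Dg y α μ ν * (v α / m)) * v μ * v ν
      + 2 * ∑ μ, ∑ ν, g y μ ν * (q / m * ∑ σ, (∑ ρ, (g y)⁻¹ μ ρ * F ρ σ) * v σ
        - 1 / m * ∑ α, ∑ β, Christoffel d g Dg y μ α β * v α * v β) * v ν = 0 := by
  set T := ∑ μ, ∑ ν, ∑ α, Dg y α μ ν * v α * v μ * v ν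
  have hdmetric : ∑ μ, ∑ ν, (∑ α, Dg y α μ ν * (v α / m)) * v μ * v ν = 1 / m * T := by
    simp only [T, mul_sum, sum_mul]
    exact sum_congr rfl fun _ _ => sum_congr rfl fun _ _ => sum_congr rfl fun _ _ => by ring
  have hforce : ∑ μ, ∑ ν, g y μ ν * (q / m * ∑ σ, (∑ ρ, (g y)⁻¹ μ ρ * F ρ σ) * v σ
        - 1 / m * ∑ α, ∑ β, Christoffel d g Dg y μ α β * v α * v β) * v ν
      = q / m * ∑ ν, ∑ σ, F ν σ * v ν * v σ - 1 / m * (1 / 2 * T) := by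
    rw [sum_comm]
    simp only [← sum_mul]
    rw [sum_congr rfl fun ν _ => by rw [sum_metric_mul_lorentz_force hsymm hdet, sub_mul],
      sum_sub_distrib]
    congr 1
    · simp only [mul_sum, sum_mul]
      exact sum_congr rfl fun _ _ => sum_congr rfl fun _ _ => by ring
    · rw [show T = _ from (sum_sum_sum_symmetrized_mul_mul_mul (Dg y) v).symm, mul_sum, mul_sum]
      exact sum_congr rfl fun _ _ => by ring
  rw [hdmetric, hforce, sum_sum_mul_mul_eq_zero_of_antisymm F hF]
  ring
end

theorem stmt_8_general (d : ℕ) (m q : ℝ)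
    (g : (Fin (d + 1) → ℝ) → Matrix (Fin (d + 1)) (Fin (d + 1)) ℝ)
    (Dg : (Fin (d + 1) → ℝ) → Fin (d + 1) → Fin (d + 1) → Fin (d + 1) → ℝ)
    (hgsymm : ∀ y μ ν, g y μ ν = g y ν μ)
    (hginv : ∀ y, IsUnit (g y).det)
    (hDg : ∀ y μ ν, HasFDerivAt (fun z => g z μ ν)
      (∑ α, Dg y α μ ν • (ContinuousLinearMap.proj α : ((Fin (d + 1)) → ℝ) →L[ℝ] ℝ)) y)
    (F : (Fin (d + 1) → ℝ) → Matrix (Fin (d + 1)) (Fin (d + 1)) ℝ)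
    (hFanti : ∀ y μ ν, F y μ ν = -F y ν μ)
    (x p : ℝ → Fin (d + 1) → ℝ)
    (hx : ∀ (τ : ℝ) (μ : Fin (d + 1)), HasDerivAt (fun s => x s μ) (p τ μ / m) τ)
    (hp : ∀ (τ : ℝ) (μ : Fin (d + 1)), HasDerivAt (fun s => p s μ)
      (q / m * ∑ ν, (∑ ρ, (g (x τ))⁻¹ μ ρ * F (x τ) ρ ν) * p τ ν
        - 1 / m * ∑ α, ∑ β, Christoffel d g Dg (x τ) μ α β * p τ α * p τ β) τ) :
    (∀ τ₁ τ₂ : ℝ, (∑ μ, ∑ ν, g (x τ₁) μ ν * p τ₁ μ * p τ₁ ν)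
        = ∑ μ, ∑ ν, g (x τ₂) μ ν * p τ₂ μ * p τ₂ ν) ∧
    (∀ τ₀ : ℝ, (∑ μ, ∑ ν, g (x τ₀) μ ν * p τ₀ μ * p τ₀ ν) = -m ^ 2 →
      ∀ τ : ℝ, (∑ μ, ∑ ν, g (x τ) μ ν * p τ μ * p τ ν) = -m ^ 2) := by
  have hS : ∀ τ, HasDerivAt (fun s => ∑ μ, ∑ ν, g (x s) μ ν * p s μ * p s ν) 0 τ := by
    intro τ
    have hsymm : (g (x τ)).IsSymm := .ext fun μ ν => hgsymm (x τ) ν μ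
    have hg : ∀ μ ν, HasDerivAt (fun s => g (x s) μ ν) (∑ α, Dg (x τ) α μ ν * (p τ α / m)) τ :=
      fun μ ν => (hDg (x τ) μ ν).comp_hasDerivAt_of_partials (hx τ)
    refine (HasDerivAt.sum_sum_mul_mul hg (hp τ) (hgsymm (x τ))).congr_deriv ?_
    exact mass_shell_deriv_eq_zero hsymm (hginv (x τ)) m q
      (F (x τ)) (hFanti (x τ)) (p τ)
  have hconst := is_const_of_deriv_eq_zero (fun s => (hS s).differentiableAt) fun s => (hS s).deriv
  exact ⟨hconst, fun τ₀ h₀ τ => (hconst τ τ₀).trans h₀⟩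

/-- conservation of the mass shell. For a charged particle moving in a
curved spacetime with metric `g` (symmetric, invertible, C¹ with partial derivatives `Dg`)
under an antisymmetric electromagnetic field `F_{μν}`, obeying
`dx^μ/dτ = p^μ/m`, `dp^μ/dτ = (q/m) g^{μρ} F_{ρν} p^ν − (1/m) Γ^μ_{αβ} p^α p^β`,
the function `τ ↦ g_{μν}(x(τ)) p^μ(τ) p^ν(τ)` is constant; in particular, a trajectory
starting on the mass shell `g_{μν} p^μ p^ν = −m²` remains on it for all `τ`. -/
theorem stmt_8 (d : ℕ) (hd : 1 ≤ d) (m q : ℝ) (hm : 0 < m)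
    (g : (Fin (d + 1) → ℝ) → Matrix (Fin (d + 1)) (Fin (d + 1)) ℝ)
    (Dg : (Fin (d + 1) → ℝ) → Fin (d + 1) → Fin (d + 1) → Fin (d + 1) → ℝ)
    (hgsymm : ∀ y μ ν, g y μ ν = g y ν μ)
    (hginv : ∀ y, IsUnit (g y).det)
    (hDg : ∀ y μ ν, HasFDerivAt (fun z => g z μ ν)
      (∑ α, Dg y α μ ν • (ContinuousLinearMap.proj α : ((Fin (d + 1)) → ℝ) →L[ℝ] ℝ)) y)
    (hDgcont : ∀ α μ ν, Continuous fun y => Dg y α μ ν)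
    (F : (Fin (d + 1) → ℝ) → Matrix (Fin (d + 1)) (Fin (d + 1)) ℝ)
    (hFanti : ∀ y μ ν, F y μ ν = -F y ν μ)
    (x p : ℝ → Fin (d + 1) → ℝ)
    (hx : ∀ (τ : ℝ) (μ : Fin (d + 1)), HasDerivAt (fun s => x s μ) (p τ μ / m) τ)
    (hp : ∀ (τ : ℝ) (μ : Fin (d + 1)), HasDerivAt (fun s => p s μ)
      (q / m * ∑ ν, (∑ ρ, (g (x τ))⁻¹ μ ρ * F (x τ) ρ ν) * p τ ν
        - 1 / m * ∑ α, ∑ β, Christoffel d g Dg (x τ) μ α β * p τ α * p τ β) τ) :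
    (∀ τ₁ τ₂ : ℝ, (∑ μ, ∑ ν, g (x τ₁) μ ν * p τ₁ μ * p τ₁ ν)
        = ∑ μ, ∑ ν, g (x τ₂) μ ν * p τ₂ μ * p τ₂ ν) ∧
    (∀ τ₀ : ℝ, (∑ μ, ∑ ν, g (x τ₀) μ ν * p τ₀ μ * p τ₀ ν) = -m ^ 2 →
      ∀ τ : ℝ, (∑ μ, ∑ ν, g (x τ) μ ν * p τ μ * p τ ν) = -m ^ 2) :=
  stmt_8_general d m q g Dg hgsymm hginv hDg F hFanti x p hx hp
end

section
/- Fix d ≥ 1 and q ∈ ℝ. Let g be a coordinate metric on ℝ^{d+1} with Christoffel symbols Γ^μ_{αβ}, let F_{μν} : ℝ^{d+1} → ℝ be antisymmetric (F_{μν} = −F_{νμ}), and let α : ℝ^{d+1} → ℝ and β_μ : ℝ^{d+1} → ℝ^{d+1} be differentiable. Define φ(x,p) := exp(−α(x) + β_μ(x)·p^μ) on ℝ^{d+1} × ℝ^{d+1}. Suppose the Liouville equation holds identically: for all (x,p), p^μ·(∂φ/∂x^μ − Γ^ρ_{μσ}(x)·p^σ·∂φ/∂p^ρ) + q·g^{μρ}(x)F_{ρν}(x)·p^ν·∂φ/∂p^μ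 = 0. Then at every x ∈ ℝ^{d+1}: (i) ∂_μ α(x) + q·β^ν(x)·F_{μν}(x) = 0 for all μ, where β^ν := g^{νρ}β_ρ; and (ii) β is a Killing covector field: ½(∂_μ β_ν + ∂_ν β_μ)(x) − Γ^ρ_{μν}(x)·β_ρ(x) = 0 for all μ, ν. -/
/-- The Jüttner-type equilibrium distribution `φ(x,p) = exp(−α(x) + β_μ(x) p^μ)`. -/
noncomputable def juttner (d : ℕ) (α : (Fin (d + 1) → ℝ) → ℝ)
    (β : (Fin (d + 1) → ℝ) → Fin (d + 1) → ℝ)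
    (z : (Fin (d + 1) → ℝ) × (Fin (d + 1) → ℝ)) : ℝ :=
  Real.exp (-α z.1 + ∑ μ, β z.1 μ * z.2 μ)

/-! Write `φ = exp S` with `S = −α + β_μ p^μ`. The Liouville operator `X` is a derivation, so
`Xφ = φ · XS`, and since `φ > 0` the Liouville equation says that `XS` vanishes for every momentum
`p`. Now `XS` is a quadratic polynomial in `p`, with linear coefficients `−∂_ν α + q β^ρ F_{ρν}` and
quadratic coefficients `∂_μ β_ν − Γ^ρ_{μν} β_ρ`. An identically vanishing quadratic polynomial has
zero linear part and antisymmetric quadratic coefficients; the antisymmetry of `F` turns the first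
condition into (i), and the symmetry of `Γ` in its lower indices turns the second into the
Killing equation (ii). -/

open Finset

theorem coeffs_eq_zero_of_forall_linear_add_quadratic_eq_zero {R ι : Type*} [Field R] [CharZero R]
    [Fintype ι] [DecidableEq ι] (L : ι → R) (Q : ι → ι → R)
    (h : ∀ p : ι → R, ∑ ν, L ν * p ν + ∑ μ, ∑ ν, Q μ ν * p μ * p ν = 0) :
    (∀ ν, L ν = 0) ∧ ∀ μ ν, Q μ ν + Q ν μ = 0 := by
  have h_single (ν : ι) (t : R) : t * L ν + t * t * Q ν ν = 0 := by
    simpa [Pi.single_apply, mul_ite, ite_mul, sum_ite_eq', mul_comm, mul_left_comm]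
      using h (Pi.single ν t)
  have hL (ν : ι) : L ν = 0 := by
    linear_combination (h_single ν 1 - h_single ν (-1)) / 2
  have hQ (ν : ι) : Q ν ν = 0 := by
    linear_combination h_single ν 1 - hL ν
  refine ⟨hL, fun μ ν => ?_⟩
  obtain rfl | hμν := eq_or_ne μ ν
  · linear_combination 2 * hQ μ
  · have h_pair := h (Pi.single μ 1 + Pi.single ν 1)
    simp only [hL, hQ, Pi.add_apply, Pi.single_apply, mul_add, mul_ite, mul_one, mul_zero,
      ite_self, add_zero, zero_add, sum_const_zero, sum_add_distrib, sum_ite_eq', mem_univ,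
      ↓reduceIte] at h_pair
    linear_combination h_pair

theorem coeffs_eq_of_hasFDerivAt_sum_smul_proj {𝕜 ι : Type*} [NontriviallyNormedField 𝕜]
    [Fintype ι] [DecidableEq ι] {f : (ι → 𝕜) → 𝕜} {x : ι → 𝕜} {c c' : ι → 𝕜}
    (h : HasFDerivAt f (∑ i, c i • (ContinuousLinearMap.proj i : (ι → 𝕜) →L[𝕜] 𝕜)) x)
    (h' : HasFDerivAt f (∑ i, c' i • (ContinuousLinearMap.proj i : (ι → 𝕜) →L[𝕜] 𝕜)) x) :
    c = c' := by
  funext i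
  simpa [Pi.single_apply] using congr($(h.unique h') (Pi.single i 1))

theorem liouville_sum_eq_mul_linear_add_quadratic {ι : Type*} [Fintype ι] (E q : ℝ) (a p b : ι → ℝ)
    (B : ι → ι → ℝ) (Gi F : Matrix ι ι ℝ) (G : ι → ι → ι → ℝ) :
    ∑ μ, p μ * (E * (-a μ + ∑ ν, B μ ν * p ν) - ∑ ρ, (∑ σ, G ρ μ σ * p σ) * (E * b ρ))
        + q * ∑ μ, (∑ ρ, Gi μ ρ * ∑ ν, F ρ ν * p ν) * (E * b μ)
      = E * (∑ ν, (-a ν + q * ∑ ρ, (∑ μ, Gi μ ρ * b μ) * F ρ ν) * p ν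
        + ∑ μ, ∑ ν, (B μ ν - ∑ ρ, G ρ μ ν * b ρ) * p μ * p ν) := by
  have hB : ∑ μ, p μ * ∑ ν, B μ ν * p ν = ∑ μ, ∑ ν, B μ ν * p μ * p ν := by
    simp only [mul_sum]
    exact sum_congr rfl fun _ _ => sum_congr rfl fun _ _ => by ring
  have hG : ∑ μ, p μ * ∑ ρ, (∑ σ, G ρ μ σ * p σ) * b ρ
      = ∑ μ, ∑ ν, (∑ ρ, G ρ μ ν * b ρ) * p μ * p ν := by
    refine sum_congr rfl fun μ _ => ?_
    simp only [mul_sum, sum_mul]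
    rw [sum_comm]
    exact sum_congr rfl fun _ _ => sum_congr rfl fun _ _ => by ring
  have hF : ∑ μ, (∑ ρ, Gi μ ρ * ∑ ν, F ρ ν * p ν) * b μ
      = ∑ ν, (∑ ρ, (∑ μ, Gi μ ρ * b μ) * F ρ ν) * p ν := by
    simp only [mul_sum, sum_mul]
    rw [sum_comm_cycle]
    refine sum_congr rfl fun ν _ => ?_
    rw [sum_comm]
    exact sum_congr rfl fun _ _ => sum_congr rfl fun _ _ => by ring
  simp only [mul_left_comm _ E, ← mul_sum, ← mul_sub]
  rw [← mul_add, hF]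
  congr 1
  simp only [mul_add, mul_sub, sum_add_distrib, sum_sub_distrib, hB, hG]
  simp only [add_mul, sub_mul, sum_add_distrib, sum_sub_distrib, mul_assoc, ← mul_sum,
    mul_comm (p _) (-a _)]
  ring

section Juttner

variable {d : ℕ} {α : (Fin (d + 1) → ℝ) → ℝ} {β : (Fin (d + 1) → ℝ) → Fin (d + 1) → ℝ}

theorem fderiv_juttner_apply (hα : Differentiable ℝ α) (hβ : ∀ μ, Differentiable ℝ fun x => β x μ)
    (x p v w : Fin (d + 1) → ℝ) :
    fderiv ℝ (juttner d α β) (x, p) (v, w) =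
      juttner d α β (x, p) *
        (-fderiv ℝ α x v + ∑ μ, (fderiv ℝ (fun z => β z μ) x v * p μ + β x μ * w μ)) := by
  let E := Fin (d + 1) → ℝ
  have hexponent : HasFDerivAt (fun z : E × E => -α z.1 + ∑ μ, β z.1 μ * z.2 μ)
      (-(fderiv ℝ α x).comp (.fst ℝ E E)
        + ∑ μ, (β x μ • (ContinuousLinearMap.proj μ).comp (.snd ℝ E E)
          + p μ • (fderiv ℝ (fun z => β z μ) x).comp (.fst ℝ E E))) (x, p) :=
    ((hα x).hasFDerivAt.comp (x, p) hasFDerivAt_fst).neg.add <| .fun_sum fun μ _ =>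
      ((hβ μ x).hasFDerivAt.comp (x, p) hasFDerivAt_fst).mul
        ((ContinuousLinearMap.proj μ).comp (.snd ℝ E E)).hasFDerivAt
  have hφ : HasFDerivAt (juttner d α β) _ (x, p) := hexponent.exp
  rw [hφ.fderiv]
  simp only [add_apply, neg_apply, smul_apply, ContinuousLinearMap.comp_apply,
    ContinuousLinearMap.coe_fst', ContinuousLinearMap.coe_snd', ContinuousLinearMap.proj_apply,
    FunLike.coe_sum, Finset.sum_apply, smul_eq_mul]
  congr 2
  exact sum_congr rfl fun μ _ => by ring

theorem fderiv_juttner_apply_single_fst (hα : Differentiable ℝ α)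
    (hβ : ∀ μ, Differentiable ℝ fun x => β x μ) (x p : Fin (d + 1) → ℝ) (μ : Fin (d + 1)) :
    fderiv ℝ (juttner d α β) (x, p) (Pi.single μ 1, 0) =
      juttner d α β (x, p) *
        (-fderiv ℝ α x (Pi.single μ 1)
          + ∑ ν, fderiv ℝ (fun z => β z ν) x (Pi.single μ 1) * p ν) := by
  simp [fderiv_juttner_apply hα hβ]

theorem fderiv_juttner_apply_single_snd (hα : Differentiable ℝ α)
    (hβ : ∀ μ, Differentiable ℝ fun x => β x μ) (x p : Fin (d + 1) → ℝ) (ρ : Fin (d + 1)) :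
    fderiv ℝ (juttner d α β) (x, p) (0, Pi.single ρ 1) = juttner d α β (x, p) * β x ρ := by
  simp [fderiv_juttner_apply hα hβ, Pi.single_apply]

end Juttner

theorem Christoffel_comm {d : ℕ} (g : (Fin (d + 1) → ℝ) → Matrix (Fin (d + 1)) (Fin (d + 1)) ℝ)
    {Dg : (Fin (d + 1) → ℝ) → Fin (d + 1) → Fin (d + 1) → Fin (d + 1) → ℝ}
    {y : Fin (d + 1) → ℝ} (hDg : ∀ a μ ν, Dg y a μ ν = Dg y a ν μ) (ρ μ ν : Fin (d + 1)) :
    Christoffel d g Dg y ρ μ ν = Christoffel d g Dg y ρ ν μ := by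
  unfold Christoffel
  congr 1
  exact sum_congr rfl fun a _ => by rw [hDg a μ ν]; ring

theorem stmt_12_general (d : ℕ) (q : ℝ)
    (g : (Fin (d + 1) → ℝ) → Matrix (Fin (d + 1)) (Fin (d + 1)) ℝ)
    (Dg : (Fin (d + 1) → ℝ) → Fin (d + 1) → Fin (d + 1) → Fin (d + 1) → ℝ)
    (hgsymm : ∀ x μ ν, g x μ ν = g x ν μ)
    (hDg : ∀ x μ ν, HasFDerivAt (fun z => g z μ ν)
      (∑ α, Dg x α μ ν • (ContinuousLinearMap.proj α : ((Fin (d + 1)) → ℝ) →L[ℝ] ℝ)) x)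
    (F : (Fin (d + 1) → ℝ) → Matrix (Fin (d + 1)) (Fin (d + 1)) ℝ)
    (hFanti : ∀ x μ ν, F x μ ν = -F x ν μ)
    (α : (Fin (d + 1) → ℝ) → ℝ) (β : (Fin (d + 1) → ℝ) → Fin (d + 1) → ℝ)
    (hα : Differentiable ℝ α) (hβ : ∀ μ, Differentiable ℝ fun x => β x μ)
    (hLiouville : ∀ (x p : Fin (d + 1) → ℝ),
      (∑ μ, p μ *
        (fderiv ℝ (juttner d α β) (x, p) ((Pi.single μ 1 : Fin (d + 1) → ℝ), 0)
          - ∑ ρ, (∑ σ, Christoffel d g Dg x ρ μ σ * p σ) *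
              fderiv ℝ (juttner d α β) (x, p) (0, (Pi.single ρ 1 : Fin (d + 1) → ℝ))))
      + q * ∑ μ, (∑ ρ, (g x)⁻¹ μ ρ * ∑ ν, F x ρ ν * p ν) *
          fderiv ℝ (juttner d α β) (x, p) (0, (Pi.single μ 1 : Fin (d + 1) → ℝ)) = 0) :
    ∀ x : Fin (d + 1) → ℝ,
      (∀ μ, fderiv ℝ α x (Pi.single μ 1)
          + q * ∑ ν, (∑ ρ, (g x)⁻¹ ν ρ * β x ρ) * F x μ ν = 0) ∧
      (∀ μ ν, (1 / 2) * (fderiv ℝ (fun z => β z ν) x (Pi.single μ 1)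
            + fderiv ℝ (fun z => β z μ) x (Pi.single ν 1))
          - ∑ ρ, Christoffel d g Dg x ρ μ ν * β x ρ = 0) := by
  intro x
  have hpoly (p : Fin (d + 1) → ℝ) :
      ∑ ν, (-fderiv ℝ α x (Pi.single ν 1)
          + q * ∑ ρ, (∑ μ, (g x)⁻¹ μ ρ * β x μ) * F x ρ ν) * p ν
        + ∑ μ, ∑ ν, (fderiv ℝ (fun z => β z ν) x (Pi.single μ 1)
          - ∑ ρ, Christoffel d g Dg x ρ μ ν * β x ρ) * p μ * p ν = 0 := by
    have h := hLiouville x p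
    simp only [fderiv_juttner_apply_single_fst hα hβ, fderiv_juttner_apply_single_snd hα hβ] at h
    rw [liouville_sum_eq_mul_linear_add_quadratic] at h
    exact (mul_eq_zero.mp h).resolve_left (Real.exp_pos _).ne'
  obtain ⟨hlin, hquad⟩ := coeffs_eq_zero_of_forall_linear_add_quadratic_eq_zero _ _ hpoly
  refine ⟨fun μ => ?_, fun μ ν => ?_⟩
  · have hginv : ((g x)⁻¹).IsSymm := (Matrix.IsSymm.ext fun μ ν => hgsymm x ν μ).inv
    have hforce : ∑ ν, (∑ ρ, (g x)⁻¹ ν ρ * β x ρ) * F x μ ν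
        = -∑ ν, (∑ ρ, (g x)⁻¹ ρ ν * β x ρ) * F x ν μ := by
      simp only [← sum_neg_distrib, hFanti x μ, hginv.apply, mul_neg]
    linear_combination -hlin μ + q * hforce
  · have hDg_symm (a μ ν : Fin (d + 1)) : Dg x a μ ν = Dg x a ν μ := by
      refine congrFun (coeffs_eq_of_hasFDerivAt_sum_smul_proj (c' := (Dg x · ν μ)) (hDg x μ ν) ?_) a
      simpa only [hgsymm _ ν μ] using hDg x ν μ
    have h := hquad μ ν
    simp only [Christoffel_comm g hDg_symm _ ν μ] at h
    linear_combination h / 2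

/-- the Liouville equation forces the equilibrium conditions. If the
Jüttner distribution `φ(x,p) = exp(−α(x) + β_μ(x) p^μ)` satisfies the Liouville equation
`p^μ (∂φ/∂x^μ − Γ^ρ_{μσ} p^σ ∂φ/∂p^ρ) + q g^{μρ} F_{ρν} p^ν ∂φ/∂p^μ = 0` identically,
then at every `x`: (i) `∂_μ α + q β^ν F_{μν} = 0`, and (ii) `β` is a Killing covector:
`½(∂_μ β_ν + ∂_ν β_μ) − Γ^ρ_{μν} β_ρ = 0`. -/
theorem stmt_12 (d : ℕ) (hd : 1 ≤ d) (q : ℝ)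
    (g : (Fin (d + 1) → ℝ) → Matrix (Fin (d + 1)) (Fin (d + 1)) ℝ)
    (Dg : (Fin (d + 1) → ℝ) → Fin (d + 1) → Fin (d + 1) → Fin (d + 1) → ℝ)
    (hgsymm : ∀ x μ ν, g x μ ν = g x ν μ)
    (hginv : ∀ x, IsUnit (g x).det)
    (hDg : ∀ x μ ν, HasFDerivAt (fun z => g z μ ν)
      (∑ α, Dg x α μ ν • (ContinuousLinearMap.proj α : ((Fin (d + 1)) → ℝ) →L[ℝ] ℝ)) x)
    (F : (Fin (d + 1) → ℝ) → Matrix (Fin (d + 1)) (Fin (d + 1)) ℝ)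
    (hFanti : ∀ x μ ν, F x μ ν = -F x ν μ)
    (α : (Fin (d + 1) → ℝ) → ℝ) (β : (Fin (d + 1) → ℝ) → Fin (d + 1) → ℝ)
    (hα : Differentiable ℝ α) (hβ : ∀ μ, Differentiable ℝ fun x => β x μ)
    (hLiouville : ∀ (x p : Fin (d + 1) → ℝ),
      (∑ μ, p μ *
        (fderiv ℝ (juttner d α β) (x, p) ((Pi.single μ 1 : Fin (d + 1) → ℝ), 0)
          - ∑ ρ, (∑ σ, Christoffel d g Dg x ρ μ σ * p σ) *
              fderiv ℝ (juttner d α β) (x, p) (0, (Pi.single ρ 1 : Fin (d + 1) → ℝ))))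
      + q * ∑ μ, (∑ ρ, (g x)⁻¹ μ ρ * ∑ ν, F x ρ ν * p ν) *
          fderiv ℝ (juttner d α β) (x, p) (0, (Pi.single μ 1 : Fin (d + 1) → ℝ)) = 0) :
    ∀ x : Fin (d + 1) → ℝ,
      (∀ μ, fderiv ℝ α x (Pi.single μ 1)
          + q * ∑ ν, (∑ ρ, (g x)⁻¹ ν ρ * β x ρ) * F x μ ν = 0) ∧
      (∀ μ ν, (1 / 2) * (fderiv ℝ (fun z => β z ν) x (Pi.single μ 1)
            + fderiv ℝ (fun z => β z μ) x (Pi.single ν 1))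
          - ∑ ρ, Christoffel d g Dg x ρ μ ν * β x ρ = 0) :=
  stmt_12_general d q g Dg hgsymm hDg F hFanti α β hα hβ hLiouville
end

section
/- Fix d ≥ 1 and q ∈ ℝ. Let g be a coordinate metric on ℝ^{d+1} with Christoffel symbols Γ^μ_{αβ}, let F_{μν} : ℝ^{d+1} → ℝ be antisymmetric (F_{μν} = −F_{νμ}), and let α : ℝ^{d+1} → ℝ and β_μ : ℝ^{d+1} → ℝ^{d+1} be differentiable. Assume that at every x ∈ ℝ^{d+1}: (i) ∂_μ α(x) + q·β^ν(x)·F_{μν}(x) = 0 for all μ, where β^ν := g^{νρ}β_ρ; and (ii) ½(∂_μ β_ν + ∂_ν β_μ)(x) − Γ^ρ_{μν}(x)·β_ρ(x) = 0 for all μ, ν. Then φ(x,p) := exp(−α(x) + β_μ(x)·p^μ) satisfies the Liouville equation identically: for all (x,p) ∈ ℝ^{d+1} × ℝ^{d+1}, p^μ·(∂φ/∂x^μ − Γ^ρ_{μσ}(x)·p^σ·∂φ/∂p^ρ) + q·g^{μρ}(x)F_{ρν}(x)·p^ν·∂φ/∂p^μ = 0. -/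
/-!
Writing `φ = exp S` with `S(x, p) = −α(x) + β_μ(x) p^μ`, the Liouville operator `L` is a
derivation, so `L φ = φ · L S`. In `L S` the terms quadratic in `p` are
`p^μ p^ν (∂_μ β_ν − Γ^ρ_{μν} β_ρ)`, which only see the symmetric part of the bracket and hence
vanish by the Killing equation (ii); the terms linear in `p` are
`−p^μ ∂_μ α + q β^μ F_{μν} p^ν = q p^μ β^ν (F_{μν} + F_{νμ})` by (i), which vanishes since `F`
is antisymmetric.
-/

open Finset Matrix

section QuadraticForms

variable {ι R : Type*} [Fintype ι]

lemma dotProduct_mulVec_self_eq_of_symmetrization [Field R] [NeZero (2 : R)]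
    {b K : Matrix ι ι R} (h : (1 / 2 : R) • (b + bᵀ) = K) (p : ι → R) :
    p ⬝ᵥ (b *ᵥ p) = p ⬝ᵥ (K *ᵥ p) := by
  rw [← h, smul_mulVec, add_mulVec, dotProduct_smul, dotProduct_add,
    dotProduct_transpose_mulVec, smul_eq_mul]
  field_simp
  ring

lemma dotProduct_mulVec_eq_neg_of_transpose_eq_neg [CommRing R] {F : Matrix ι ι R}
    (hF : Fᵀ = -F) (u v : ι → R) : u ⬝ᵥ (F *ᵥ v) = -(v ⬝ᵥ (F *ᵥ u)) := by
  rw [← dotProduct_transpose_mulVec, hF, neg_mulVec, dotProduct_neg]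

lemma sum_mul_sum_sum_mul_mul_eq_dotProduct_mulVec [CommSemiring R] (Γ : ι → ι → ι → R)
    (p β : ι → R) :
    ∑ μ, p μ * ∑ ρ, (∑ σ, Γ ρ μ σ * p σ) * β ρ =
      p ⬝ᵥ (of (fun μ σ => ∑ ρ, Γ ρ μ σ * β ρ) *ᵥ p) := by
  simp only [dotProduct, mulVec, of_apply, mul_sum, sum_mul]
  refine sum_congr rfl fun μ _ => ?_
  rw [sum_comm]
  exact sum_congr rfl fun σ _ => sum_congr rfl fun ρ _ => by ring

end QuadraticForms

section Liouville

variable {ι : Type*} [Fintype ι]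

/-- The Liouville vector field at momentum `p`, applied to a function whose partial derivatives
in `x^μ` and in `p^μ` are `Dx μ` and `Dp μ`. -/
def liouvilleOp (Γ : ι → ι → ι → ℝ) (ginv F : Matrix ι ι ℝ) (q : ℝ) (p Dx Dp : ι → ℝ) : ℝ :=
  ∑ μ, p μ * (Dx μ - ∑ ρ, (∑ σ, Γ ρ μ σ * p σ) * Dp ρ)
    + q * ∑ μ, (∑ ρ, ginv μ ρ * ∑ ν, F ρ ν * p ν) * Dp μ

lemma liouvilleOp_smul (Γ : ι → ι → ι → ℝ) (ginv F : Matrix ι ι ℝ) (q : ℝ) (p Dx Dp : ι → ℝ)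
    (c : ℝ) : liouvilleOp Γ ginv F q p (c • Dx) (c • Dp) = c * liouvilleOp Γ ginv F q p Dx Dp := by
  simp only [liouvilleOp, Pi.smul_apply, smul_eq_mul, mul_left_comm _ c, ← mul_sum, ← mul_sub,
    ← mul_add]

/-- `-a + b *ᵥ p` and `β` are the `x`- and `p`-gradients of `S = −α(x) + β_μ(x) p^μ`, with
`a μ = ∂_μ α` and `b μ ν = ∂_μ β_ν`. -/
lemma liouvilleOp_exponent_eq_zero {Γ : ι → ι → ι → ℝ} {ginv F b : Matrix ι ι ℝ} {q : ℝ}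
    {a β : ι → ℝ} (hginv : ginv.IsSymm) (hF : Fᵀ = -F)
    (hgrad : ∀ μ, a μ + q * ∑ ν, (ginv *ᵥ β) ν * F μ ν = 0)
    (hkilling : ∀ μ ν, (1 / 2) * (b μ ν + b ν μ) - ∑ ρ, Γ ρ μ ν * β ρ = 0) (p : ι → ℝ) :
    liouvilleOp Γ ginv F q p (-a + b *ᵥ p) β = 0 := by
  have ha : a = -(q • (F *ᵥ (ginv *ᵥ β))) := by
    ext μ
    have h : a μ + q * ((ginv *ᵥ β) ⬝ᵥ F μ) = 0 := hgrad μ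
    simp only [Pi.neg_apply, Pi.smul_apply, smul_eq_mul, mulVec, dotProduct_comm (F μ)]
    linarith
  have hK : (1 / 2 : ℝ) • (b + bᵀ) = of fun μ ν => ∑ ρ, Γ ρ μ ν * β ρ := by
    ext μ ν
    simp only [Matrix.smul_apply, Matrix.add_apply, transpose_apply, of_apply, smul_eq_mul]
    linarith [hkilling μ ν]
  have hgeodesic : ∑ μ, p μ * ∑ ρ, (∑ σ, Γ ρ μ σ * p σ) * β ρ = p ⬝ᵥ (b *ᵥ p) := by
    rw [sum_mul_sum_sum_mul_mul_eq_dotProduct_mulVec,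
      dotProduct_mulVec_self_eq_of_symmetrization hK]
  have hforce :
      ∑ μ, (∑ ρ, ginv μ ρ * ∑ ν, F ρ ν * p ν) * β μ = -(p ⬝ᵥ (F *ᵥ (ginv *ᵥ β))) := by
    change (ginv *ᵥ (F *ᵥ p)) ⬝ᵥ β = _
    rw [dotProduct_comm, ← dotProduct_transpose_mulVec, hginv.eq, dotProduct_comm,
      dotProduct_mulVec_eq_neg_of_transpose_eq_neg hF]
  unfold liouvilleOp
  simp only [mul_sub, sum_sub_distrib]
  rw [hgeodesic, hforce]
  change p ⬝ᵥ (-a + b *ᵥ p) - _ + _ = 0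
  simp only [ha, dotProduct_add, neg_neg, dotProduct_smul, smul_eq_mul]
  ring

end Liouville

section Juttner

variable {d : ℕ} {α : (Fin (d + 1) → ℝ) → ℝ} {β : (Fin (d + 1) → ℝ) → Fin (d + 1) → ℝ}

lemma fderiv_juttner (hα : Differentiable ℝ α) (hβ : ∀ μ, Differentiable ℝ fun x => β x μ)
    (x p v w : Fin (d + 1) → ℝ) :
    fderiv ℝ (juttner d α β) (x, p) (v, w) =
      juttner d α β (x, p) *
        (-fderiv ℝ α x v + ∑ μ, (β x μ * w μ + p μ * fderiv ℝ (fun z => β z μ) x v)) := by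
  have hfst := hasFDerivAt_fst (𝕜 := ℝ) (p := (x, p))
  have hsnd := hasFDerivAt_snd (𝕜 := ℝ) (p := (x, p))
  have hβp (μ : Fin (d + 1)) :=
    (((hβ μ) x).hasFDerivAt.comp (x, p) hfst).fun_mul ((hasFDerivAt_apply μ p).comp (x, p) hsnd)
  have hS := ((hα x).hasFDerivAt.comp (x, p) hfst).fun_neg.fun_add
    (HasFDerivAt.fun_sum fun μ (_ : μ ∈ univ) => hβp μ)
  rw [HasFDerivAt.fderiv (f := juttner d α β) hS.exp]
  simp [juttner, mul_add]

lemma fderiv_juttner_position (hα : Differentiable ℝ α) (hβ : ∀ μ, Differentiable ℝ fun x => β x μ)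
    (x p : Fin (d + 1) → ℝ) :
    (fun μ => fderiv ℝ (juttner d α β) (x, p) (Pi.single μ 1, 0)) =
      juttner d α β (x, p) • (-(fun μ => fderiv ℝ α x (Pi.single μ 1)) +
        (of fun μ ν => fderiv ℝ (fun z => β z ν) x (Pi.single μ 1)) *ᵥ p) := by
  ext μ
  simp [fderiv_juttner hα hβ, mulVec, dotProduct, mul_comm (p _)]

lemma fderiv_juttner_momentum (hα : Differentiable ℝ α) (hβ : ∀ μ, Differentiable ℝ fun x => β x μ)
    (x p : Fin (d + 1) → ℝ) :
    (fun ρ => fderiv ℝ (juttner d α β) (x, p) (0, Pi.single ρ 1)) = juttner d α β (x, p) • β x := by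
  ext ρ
  simp [fderiv_juttner hα hβ, Pi.single_apply]

end Juttner

theorem stmt_13_general (d : ℕ) (q : ℝ)
    (g : (Fin (d + 1) → ℝ) → Matrix (Fin (d + 1)) (Fin (d + 1)) ℝ)
    (Dg : (Fin (d + 1) → ℝ) → Fin (d + 1) → Fin (d + 1) → Fin (d + 1) → ℝ)
    (hgsymm : ∀ x μ ν, g x μ ν = g x ν μ)
    (F : (Fin (d + 1) → ℝ) → Matrix (Fin (d + 1)) (Fin (d + 1)) ℝ)
    (hFanti : ∀ x μ ν, F x μ ν = -F x ν μ)
    (α : (Fin (d + 1) → ℝ) → ℝ) (β : (Fin (d + 1) → ℝ) → Fin (d + 1) → ℝ)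
    (hα : Differentiable ℝ α) (hβ : ∀ μ, Differentiable ℝ fun x => β x μ)
    (hi : ∀ (x : Fin (d + 1) → ℝ) (μ : Fin (d + 1)),
      fderiv ℝ α x (Pi.single μ 1)
        + q * ∑ ν, (∑ ρ, (g x)⁻¹ ν ρ * β x ρ) * F x μ ν = 0)
    (hii : ∀ (x : Fin (d + 1) → ℝ) (μ ν : Fin (d + 1)),
      (1 / 2) * (fderiv ℝ (fun z => β z ν) x (Pi.single μ 1)
          + fderiv ℝ (fun z => β z μ) x (Pi.single ν 1))
        - ∑ ρ, Christoffel d g Dg x ρ μ ν * β x ρ = 0) :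
    ∀ (x p : Fin (d + 1) → ℝ),
      (∑ μ, p μ *
        (fderiv ℝ (juttner d α β) (x, p) ((Pi.single μ 1 : Fin (d + 1) → ℝ), 0)
          - ∑ ρ, (∑ σ, Christoffel d g Dg x ρ μ σ * p σ) *
              fderiv ℝ (juttner d α β) (x, p) (0, (Pi.single ρ 1 : Fin (d + 1) → ℝ))))
      + q * ∑ μ, (∑ ρ, (g x)⁻¹ μ ρ * ∑ ν, F x ρ ν * p ν) *
          fderiv ℝ (juttner d α β) (x, p) (0, (Pi.single μ 1 : Fin (d + 1) → ℝ)) = 0 := by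
  intro x p
  have hginv : ((g x)⁻¹).IsSymm := (IsSymm.ext fun μ ν => hgsymm x ν μ).inv
  have hF : (F x)ᵀ = -F x := by
    ext μ ν
    exact hFanti x ν μ
  change liouvilleOp (Christoffel d g Dg x) (g x)⁻¹ (F x) q p
    (fun μ => fderiv ℝ (juttner d α β) (x, p) (Pi.single μ 1, 0))
    (fun ρ => fderiv ℝ (juttner d α β) (x, p) (0, Pi.single ρ 1)) = 0
  rw [fderiv_juttner_position hα hβ, fderiv_juttner_momentum hα hβ, liouvilleOp_smul]
  exact mul_eq_zero_of_right _ (liouvilleOp_exponent_eq_zero hginv hF (hi x) (hii x) p)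

/-- the equilibrium conditions imply the Liouville equation. If at every
`x`: (i) `∂_μ α + q β^ν F_{μν} = 0`, and (ii) `½(∂_μ β_ν + ∂_ν β_μ) − Γ^ρ_{μν} β_ρ = 0`,
then the Jüttner distribution `φ(x,p) = exp(−α(x) + β_μ(x) p^μ)` satisfies the Liouville
equation `p^μ (∂φ/∂x^μ − Γ^ρ_{μσ} p^σ ∂φ/∂p^ρ) + q g^{μρ} F_{ρν} p^ν ∂φ/∂p^μ = 0`
identically. -/
theorem stmt_13 (d : ℕ) (hd : 1 ≤ d) (q : ℝ)
    (g : (Fin (d + 1) → ℝ) → Matrix (Fin (d + 1)) (Fin (d + 1)) ℝ)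
    (Dg : (Fin (d + 1) → ℝ) → Fin (d + 1) → Fin (d + 1) → Fin (d + 1) → ℝ)
    (hgsymm : ∀ x μ ν, g x μ ν = g x ν μ)
    (hginv : ∀ x, IsUnit (g x).det)
    (hDg : ∀ x μ ν, HasFDerivAt (fun z => g z μ ν)
      (∑ α, Dg x α μ ν • (ContinuousLinearMap.proj α : ((Fin (d + 1)) → ℝ) →L[ℝ] ℝ)) x)
    (F : (Fin (d + 1) → ℝ) → Matrix (Fin (d + 1)) (Fin (d + 1)) ℝ)
    (hFanti : ∀ x μ ν, F x μ ν = -F x ν μ)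
    (α : (Fin (d + 1) → ℝ) → ℝ) (β : (Fin (d + 1) → ℝ) → Fin (d + 1) → ℝ)
    (hα : Differentiable ℝ α) (hβ : ∀ μ, Differentiable ℝ fun x => β x μ)
    (hi : ∀ (x : Fin (d + 1) → ℝ) (μ : Fin (d + 1)),
      fderiv ℝ α x (Pi.single μ 1)
        + q * ∑ ν, (∑ ρ, (g x)⁻¹ ν ρ * β x ρ) * F x μ ν = 0)
    (hii : ∀ (x : Fin (d + 1) → ℝ) (μ ν : Fin (d + 1)),
      (1 / 2) * (fderiv ℝ (fun z => β z ν) x (Pi.single μ 1)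
          + fderiv ℝ (fun z => β z μ) x (Pi.single ν 1))
        - ∑ ρ, Christoffel d g Dg x ρ μ ν * β x ρ = 0) :
    ∀ (x p : Fin (d + 1) → ℝ),
      (∑ μ, p μ *
        (fderiv ℝ (juttner d α β) (x, p) ((Pi.single μ 1 : Fin (d + 1) → ℝ), 0)
          - ∑ ρ, (∑ σ, Christoffel d g Dg x ρ μ σ * p σ) *
              fderiv ℝ (juttner d α β) (x, p) (0, (Pi.single ρ 1 : Fin (d + 1) → ℝ))))
      + q * ∑ μ, (∑ ρ, (g x)⁻¹ μ ρ * ∑ ν, F x ρ ν * p ν) *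
          fderiv ℝ (juttner d α β) (x, p) (0, (Pi.single μ 1 : Fin (d + 1) → ℝ)) = 0 :=
  stmt_13_general d q g Dg hgsymm F hFanti α β hα hβ hi hii
end

section
/- Fix d ≥ 1 and a symmetric (d+1)×(d+1) real matrix G with entries G_{μν}; for a vector V ∈ ℝ^{d+1} write V_μ := G_{μν}V^ν. Let S, n, U, Z, z ∈ ℝ^{d+1}, let T be a symmetric (d+1)×(d+1) real matrix with entries T^{μν}, and let P, α ∈ ℝ and β, γ ∈ ℝ with β ≠ 0, γ ≠ 0. Assume: (i) U = γ·(Z + z); (ii) γ = −G(U,Z) = −U^μ Z_μ; (iii) z^μ Z_μ = 0; and (iv) the covariant Euler relation S^μ = β·U^μ·P − T^{μν}·β·U_ν + α·n^μ for all μ. Define e_A := T^{μν}Z_μ Z_ν, n_A := −Z_μ n^μ, s_A := −Z_μ S^μ, 𝒯_A := −T^{ρν} z_ρ Z_ν, T_A := (γβ)⁻¹ and μ_A := −α·(γβ)⁻¹. Then e_A = T_A·s_A + μ_A·n_A − P + 𝒯_A. -/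
/-!
Contracting the Euler relation with `Z_μ`, and using `U^μ Z_μ = −γ` and
`U_ν = γ (Z_ν + z_ν)`, gives `s_A = γβ (P + e_A + T^{μν} Z_μ z_ν) + α n_A`.
Dividing by `γβ` and using the symmetry of `T` to identify `T^{μν} Z_μ z_ν` with `−𝒯_A`
yields the relation.
-/

open Matrix

section

variable {ι K : Type*} [Fintype ι]

theorem sum_sum_mul_mul_eq_dotProduct_mulVec [CommSemiring K] (T : Matrix ι ι K) (a b : ι → K) :
    ∑ i, ∑ j, T i j * a i * b j = a ⬝ᵥ T *ᵥ b := by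
  simp only [dotProduct, mulVec, Finset.mul_sum]
  exact Finset.sum_congr rfl fun i _ => Finset.sum_congr rfl fun j _ => by ring

theorem Matrix.IsSymm.dotProduct_mulVec_comm [CommSemiring K] {T : Matrix ι ι K} (hT : T.IsSymm)
    (a b : ι → K) : a ⬝ᵥ T *ᵥ b = b ⬝ᵥ T *ᵥ a := by
  rw [dotProduct_mulVec, dotProduct_comm, ← mulVec_transpose, hT.eq]

-- `G *ᵥ V` is the lowered covector `V_μ`.
theorem localized_euler_relation [Field K] (G : Matrix ι ι K) {T : Matrix ι ι K} (hT : T.IsSymm)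
    {S n U Z z : ι → K} {P α β γ : K} (hβ : β ≠ 0) (hγ : γ ≠ 0)
    (hU : U = γ • (Z + z)) (hγU : γ = -(U ⬝ᵥ G *ᵥ Z))
    (hEuler : S = (β * P) • U - β • T *ᵥ (G *ᵥ U) + α • n) :
    G *ᵥ Z ⬝ᵥ T *ᵥ (G *ᵥ Z)
      = (γ * β)⁻¹ * -(G *ᵥ Z ⬝ᵥ S) + -(α * (γ * β)⁻¹) * -(G *ᵥ Z ⬝ᵥ n) - P
        + -(G *ᵥ z ⬝ᵥ T *ᵥ (G *ᵥ Z)) := by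
  have hZU : G *ᵥ Z ⬝ᵥ U = -γ := by rw [dotProduct_comm, hγU, neg_neg]
  have hZS : G *ᵥ Z ⬝ᵥ S = β * P * -γ
      - β * γ * (G *ᵥ Z ⬝ᵥ T *ᵥ (G *ᵥ Z) + G *ᵥ Z ⬝ᵥ T *ᵥ (G *ᵥ z))
      + α * (G *ᵥ Z ⬝ᵥ n) := by
    rw [hEuler, dotProduct_add, dotProduct_sub, dotProduct_smul, dotProduct_smul,
      dotProduct_smul, hZU, hU, mulVec_smul, mulVec_add, mulVec_smul, mulVec_add,
      dotProduct_smul, dotProduct_add]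
    simp only [smul_eq_mul]
    ring
  rw [hZS, hT.dotProduct_mulVec_comm (G *ᵥ z)]
  field_simp
  ring

end

theorem stmt_17_general (d : ℕ)
    (G : Matrix (Fin (d + 1)) (Fin (d + 1)) ℝ)
    (S n U Z z : Fin (d + 1) → ℝ)
    (T : Matrix (Fin (d + 1)) (Fin (d + 1)) ℝ)
    (hTsymm : ∀ μ ν, T μ ν = T ν μ)
    (P α β γ : ℝ) (hβ : β ≠ 0) (hγ : γ ≠ 0)
    (hU : ∀ μ, U μ = γ * (Z μ + z μ))
    (hγdef : γ = -∑ μ, U μ * (∑ ν, G μ ν * Z ν))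
    (hEuler : ∀ μ, S μ = β * U μ * P
      - (∑ ν, T μ ν * β * (∑ ρ, G ν ρ * U ρ)) + α * n μ) :
    (∑ μ, ∑ ν, T μ ν * (∑ ρ, G μ ρ * Z ρ) * (∑ ρ, G ν ρ * Z ρ))
      = (γ * β)⁻¹ * (-∑ μ, (∑ ρ, G μ ρ * Z ρ) * S μ)
        + (-(α * (γ * β)⁻¹)) * (-∑ μ, (∑ ρ, G μ ρ * Z ρ) * n μ)
        - P
        + (-∑ ρ, ∑ ν, T ρ ν * (∑ σ, G ρ σ * z σ) * (∑ σ, G ν σ * Z σ)) := by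
  have hUvec : U = γ • (Z + z) := funext hU
  have hEulerVec : S = (β * P) • U - β • T *ᵥ (G *ᵥ U) + α • n := by
    funext μ
    simp only [hEuler μ, Pi.add_apply, Pi.sub_apply, Pi.smul_apply, smul_eq_mul, mulVec,
      dotProduct, Finset.mul_sum]
    ring_nf
  have key := localized_euler_relation G (IsSymm.ext fun μ ν => hTsymm ν μ) hβ hγ hUvec hγdef
    hEulerVec
  rwa [← sum_sum_mul_mul_eq_dotProduct_mulVec, ← sum_sum_mul_mul_eq_dotProduct_mulVec] at key

/-- localized Euler relation relative to the observer `Z`. With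
lowered indices `V_μ := G_{μν} V^ν`, assume (i) `U = γ (Z + z)`, (ii) `γ = −U^μ Z_μ`,
(iii) `z^μ Z_μ = 0`, and (iv) the covariant Euler relation
`S^μ = β U^μ P − T^{μν} β U_ν + α n^μ`. Then with `e_A := T^{μν} Z_μ Z_ν`,
`n_A := −Z_μ n^μ`, `s_A := −Z_μ S^μ`, `𝒯_A := −T^{ρν} z_ρ Z_ν`, `T_A := (γβ)⁻¹`,
`μ_A := −α (γβ)⁻¹`, one has `e_A = T_A s_A + μ_A n_A − P + 𝒯_A`. -/
theorem stmt_17 (d : ℕ) (hd : 1 ≤ d)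
    (G : Matrix (Fin (d + 1)) (Fin (d + 1)) ℝ)
    (hGsymm : ∀ μ ν, G μ ν = G ν μ)
    (S n U Z z : Fin (d + 1) → ℝ)
    (T : Matrix (Fin (d + 1)) (Fin (d + 1)) ℝ)
    (hTsymm : ∀ μ ν, T μ ν = T ν μ)
    (P α β γ : ℝ) (hβ : β ≠ 0) (hγ : γ ≠ 0)
    (hU : ∀ μ, U μ = γ * (Z μ + z μ))
    (hγdef : γ = -∑ μ, U μ * (∑ ν, G μ ν * Z ν))
    (hzZ : ∑ μ, z μ * (∑ ν, G μ ν * Z ν) = 0)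
    (hEuler : ∀ μ, S μ = β * U μ * P
      - (∑ ν, T μ ν * β * (∑ ρ, G ν ρ * U ρ)) + α * n μ) :
    (∑ μ, ∑ ν, T μ ν * (∑ ρ, G μ ρ * Z ρ) * (∑ ρ, G ν ρ * Z ρ))
      = (γ * β)⁻¹ * (-∑ μ, (∑ ρ, G μ ρ * Z ρ) * S μ)
        + (-(α * (γ * β)⁻¹)) * (-∑ μ, (∑ ρ, G μ ρ * Z ρ) * n μ)
        - P
        + (-∑ ρ, ∑ ν, T ρ ν * (∑ σ, G ρ σ * z σ) * (∑ σ, G ν σ * Z σ)) :=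
  stmt_17_general d G S n U Z z T hTsymm P α β γ hβ hγ hU hγdef hEuler
end
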